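/- arXiv:1611.02759 — 5 statements merged into one kernel-verified Lean document; each statement's English description precedes it below -/
import Mathlib

section
/- Let v : ℝ² → ℝ be smooth and compactly supported and let q ≥ 1 be an integer. Then there exists a constant C_q > 0 (depending on v and q) such that for every k_F ≥ 1, ∫_{{k ∈ ℝ² : |k| ≤ k_F}} ∫_{{l ∈ ℝ² : |l| ≥ k_F}} |F[v](k − l)|^q dl dk ≤ C_q · k_F. (This is the upper bound in equation (2.37) of the paper: the fluctuation sum lim_TD L^{-4} Σ_{k=1}^N Σ_{l=N+1}^∞ |F[v](p_k − p_l)|^q equals a constant times ρ^{1/2}, since k_F = √(4πρ).) -/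
open MeasureTheory Real

/-- The Fourier transform `F[v](ξ) = ∫_{ℝ²} v(x) e^{−i ξ·x} dx`. -/
noncomputable def fourierTransform2 (v : EuclideanSpace ℝ (Fin 2) → ℝ)
    (ξ : EuclideanSpace ℝ (Fin 2)) : ℂ :=
  ∫ x, Complex.exp (-(Complex.I * ((inner ℝ ξ x : ℝ) : ℂ))) * (v x : ℂ)

open scoped FourierTransform

local notation "E2" => EuclideanSpace ℝ (Fin 2)

lemma fourierTransform2_eq (v : E2 → ℝ) (ξ : E2) :
    fourierTransform2 v ξ = 𝓕 (fun x => (v x : ℂ)) ((2 * π)⁻¹ • ξ) := by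
  rw [Real.fourier_eq']
  unfold fourierTransform2
  congr 1
  ext x
  rw [smul_eq_mul]
  congr 1
  have h : (inner ℝ x ((2 * π)⁻¹ • ξ) : ℝ) = (2 * π)⁻¹ * (inner ℝ ξ x : ℝ) := by
    rw [real_inner_smul_right, real_inner_comm]
  rw [h]
  have hπ : (2 * π) ≠ 0 := by positivity
  rw [show -2 * π * ((2 * π)⁻¹ * (inner ℝ ξ x : ℝ)) = -(inner ℝ ξ x : ℝ) by field_simp]
  push_cast
  ring_nf

lemma fourier_decay (v : E2 → ℝ) (hv : ContDiff ℝ (⊤ : ℕ∞) v)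
    (hsupp : HasCompactSupport v) :
    ∃ D : ℝ, 0 < D ∧ ∀ ξ, ‖fourierTransform2 v ξ‖ ≤ D / (1 + ‖ξ‖) ^ 4 := by
  set f : E2 → ℂ := fun x => (v x : ℂ) with hf_def
  have hf : ContDiff ℝ (⊤ : ℕ∞) f := Complex.ofRealCLM.contDiff.comp hv
  have hsf : HasCompactSupport f := hsupp.comp_left (g := fun r : ℝ => (r : ℂ)) (by simp)
  have h'f : ∀ (k n : ℕ), (k:ℕ∞) ≤ ⊤ → (n:ℕ∞) ≤ ⊤ →
      Integrable (fun x => ‖x‖ ^ k * ‖iteratedFDeriv ℝ n f x‖) := by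
    intro k n _ _
    have h1 : Continuous fun x : E2 => ‖x‖ ^ k * ‖iteratedFDeriv ℝ n f x‖ :=
      (continuous_norm.pow k).mul ((hf.continuous_iteratedFDeriv (by exact_mod_cast le_top)).norm)
    have h2 : HasCompactSupport fun x : E2 =>
        ‖x‖ ^ k * ‖iteratedFDeriv ℝ n f x‖ := ((hsf.iteratedFDeriv n).norm).mul_left
    exact h1.integrable_of_hasCompactSupport h2
  have key := fun (n : ℕ) (w : E2) =>
    Real.pow_mul_norm_iteratedFDeriv_fourier_le (K := ⊤) (N := ⊤) (hf.of_le (by simp)) h'f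
      (k := 0) (n := n) le_top le_top w
  obtain ⟨M0, hM0⟩ : ∃ M0 : ℝ, ∀ w, ‖w‖ ^ 0 * ‖iteratedFDeriv ℝ 0 (𝓕 f) w‖ ≤ M0 := ⟨_, key 0⟩
  obtain ⟨M4, hM4⟩ : ∃ M4 : ℝ, ∀ w, ‖w‖ ^ 4 * ‖iteratedFDeriv ℝ 0 (𝓕 f) w‖ ≤ M4 := ⟨_, key 4⟩
  replace hM0 : ∀ w, ‖𝓕 f w‖ ≤ M0 := fun w => by
    simpa [norm_iteratedFDeriv_zero] using hM0 w
  replace hM4 : ∀ w, ‖w‖ ^ 4 * ‖𝓕 f w‖ ≤ M4 := fun w => by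
    simpa [norm_iteratedFDeriv_zero] using hM4 w
  have hM0nn : 0 ≤ M0 := le_trans (norm_nonneg _) (hM0 0)
  have hM4nn : 0 ≤ M4 := le_trans (by positivity) (hM4 0)
  have hπ1 : (1:ℝ) ≤ 2 * π := by nlinarith [Real.pi_gt_three]
  have hπ0 : (0:ℝ) < 2 * π := by positivity
  refine ⟨(2*π)^4 * (16 * (M0 + M4)) + 1, by positivity, fun ξ => ?_⟩
  rw [fourierTransform2_eq v ξ]
  set w := (2 * π)⁻¹ • ξ with hw
  set a := ‖w‖ with ha
  set b := ‖𝓕 f w‖ with hb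
  have hξ : ‖ξ‖ = 2 * π * a := by
    have : ξ = (2 * π) • w := by
      rw [hw, smul_smul, mul_inv_cancel₀ (ne_of_gt hπ0), one_smul]
    rw [this, norm_smul, Real.norm_eq_abs, abs_of_pos hπ0, ha]
  have hann : 0 ≤ a := norm_nonneg _
  have hbnn : 0 ≤ b := norm_nonneg _
  have h16 : (1 + a) ^ 4 ≤ 16 * (1 + a ^ 4) := by
    nlinarith [sq_nonneg (a - 1), sq_nonneg (a + 1), sq_nonneg (a ^ 2 - 1), sq_nonneg (a ^ 2 - a),
      sq_nonneg a]
  rw [le_div_iff₀ (by positivity : (0:ℝ) < (1 + ‖ξ‖) ^ 4)]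
  have h1 : 1 + ‖ξ‖ ≤ 2 * π * (1 + a) := by rw [hξ]; nlinarith
  have h2 : (1 + ‖ξ‖) ^ 4 ≤ (2 * π) ^ 4 * (1 + a) ^ 4 := by
    calc (1 + ‖ξ‖) ^ 4 ≤ (2 * π * (1 + a)) ^ 4 := by
          apply pow_le_pow_left₀ (by positivity) h1
      _ = (2 * π) ^ 4 * (1 + a) ^ 4 := by ring
  have h3 : (1 + a) ^ 4 * b ≤ 16 * (M0 + M4) := by
    have := mul_le_mul_of_nonneg_right h16 hbnn
    have h4b := hM4 w
    have h0b := hM0 w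
    nlinarith
  calc b * (1 + ‖ξ‖) ^ 4 ≤ b * ((2 * π) ^ 4 * (1 + a) ^ 4) := by
        apply mul_le_mul_of_nonneg_left h2 hbnn
    _ = (2 * π) ^ 4 * ((1 + a) ^ 4 * b) := by ring
    _ ≤ (2 * π) ^ 4 * (16 * (M0 + M4)) := by
        apply mul_le_mul_of_nonneg_left h3 (by positivity)
    _ ≤ (2*π)^4 * (16 * (M0 + M4)) + 1 := by linarith

lemma closedBall_vol {r : ℝ} (hr : 0 ≤ r) :
    volume (Metric.closedBall (0:E2) r) = ENNReal.ofReal (π * r ^ 2) := by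
  rw [EuclideanSpace.volume_closedBall]
  simp only [Fintype.card_fin]
  rw [show ((2:ℕ):ℝ)/2 + 1 = 2 by norm_num, Real.Gamma_two]
  rw [← ENNReal.ofReal_pow hr, ← ENNReal.ofReal_mul (by positivity)]
  congr 1
  rw [Real.sq_sqrt Real.pi_nonneg]
  ring

lemma ball_vol {r : ℝ} (hr : 0 ≤ r) :
    volume (Metric.ball (0:E2) r) = ENNReal.ofReal (π * r ^ 2) := by
  rw [← Measure.addHaar_closedBall_eq_addHaar_ball]
  exact closedBall_vol hr

lemma vol_bound (kF : ℝ) (hkF : 0 ≤ kF) (ξ : E2) :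
    (volume ({k : E2 | ‖k‖ ≤ kF} ∩ {k | kF ≤ ‖k - ξ‖})).toReal ≤ 2 * π * (kF * ‖ξ‖) := by
  rcases le_or_gt kF ‖ξ‖ with hc | hc
  · have hsub : {k : E2 | ‖k‖ ≤ kF} ∩ {k | kF ≤ ‖k - ξ‖} ⊆ Metric.closedBall (0:E2) kF := by
      intro k hk
      simpa [Metric.mem_closedBall, dist_eq_norm] using hk.1
    have h1 : volume ({k : E2 | ‖k‖ ≤ kF} ∩ {k | kF ≤ ‖k - ξ‖}) ≤ ENNReal.ofReal (π * kF ^ 2) :=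
      (closedBall_vol hkF) ▸ measure_mono hsub
    calc (volume ({k : E2 | ‖k‖ ≤ kF} ∩ {k | kF ≤ ‖k - ξ‖})).toReal
        ≤ (ENNReal.ofReal (π * kF ^ 2)).toReal :=
          ENNReal.toReal_mono ENNReal.ofReal_ne_top h1
      _ = π * kF ^ 2 := ENNReal.toReal_ofReal (by positivity)
      _ ≤ 2 * π * (kF * ‖ξ‖) := by
          nlinarith [Real.pi_pos, mul_le_mul_of_nonneg_left hc (mul_nonneg Real.pi_pos.le hkF)]
  · have hsub : {k : E2 | ‖k‖ ≤ kF} ∩ {k | kF ≤ ‖k - ξ‖} ⊆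
        Metric.closedBall (0:E2) kF \ Metric.ball (0:E2) (kF - ‖ξ‖) := by
      intro k hk
      obtain ⟨h1, h2⟩ := hk
      simp only [Set.mem_setOf_eq] at h1 h2
      constructor
      · simpa [Metric.mem_closedBall, dist_eq_norm] using h1
      · simp only [Metric.mem_ball, dist_eq_norm, sub_zero, not_lt]
        have : ‖k - ξ‖ ≤ ‖k‖ + ‖ξ‖ := norm_sub_le k ξ
        linarith
    have hd : volume (Metric.closedBall (0:E2) kF \ Metric.ball (0:E2) (kF - ‖ξ‖))
        = ENNReal.ofReal (π * kF ^ 2) - ENNReal.ofReal (π * (kF - ‖ξ‖) ^ 2) := by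
      rw [measure_diff (Metric.ball_subset_closedBall.trans
            (Metric.closedBall_subset_closedBall (by linarith [norm_nonneg ξ])))
          measurableSet_ball.nullMeasurableSet
          (ne_of_lt (lt_of_le_of_lt (measure_mono Metric.ball_subset_closedBall)
            (by rw [closedBall_vol (by linarith : (0:ℝ) ≤ kF - ‖ξ‖)]
                exact ENNReal.ofReal_lt_top))),
        closedBall_vol hkF, ball_vol (by linarith : (0:ℝ) ≤ kF - ‖ξ‖)]
    have h1 : volume ({k : E2 | ‖k‖ ≤ kF} ∩ {k | kF ≤ ‖k - ξ‖})
        ≤ ENNReal.ofReal (π * kF ^ 2) - ENNReal.ofReal (π * (kF - ‖ξ‖) ^ 2) :=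
      hd ▸ measure_mono hsub
    have hxi : 0 ≤ ‖ξ‖ := norm_nonneg _
    have hpos : (0:ℝ) ≤ π * kF ^ 2 - π * (kF - ‖ξ‖) ^ 2 := by
      nlinarith [mul_nonneg (mul_nonneg Real.pi_pos.le hxi) (by linarith : (0:ℝ) ≤ 2*kF - ‖ξ‖)]
    calc (volume ({k : E2 | ‖k‖ ≤ kF} ∩ {k | kF ≤ ‖k - ξ‖})).toReal
        ≤ (ENNReal.ofReal (π * kF ^ 2) - ENNReal.ofReal (π * (kF - ‖ξ‖) ^ 2)).toReal := by
          apply ENNReal.toReal_mono _ h1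
          exact ENNReal.sub_ne_top ENNReal.ofReal_ne_top
      _ = π * kF ^ 2 - π * (kF - ‖ξ‖) ^ 2 := by
          rw [← ENNReal.ofReal_sub _ (by positivity),
            ENNReal.toReal_ofReal hpos]
      _ ≤ 2 * π * (kF * ‖ξ‖) := by nlinarith [mul_nonneg Real.pi_pos.le (sq_nonneg ‖ξ‖)]

/-- Upper bound in (2.37): for smooth compactly supported `v` and `q ≥ 1`, the fluctuation
integral `∫_{|k| ≤ k_F} ∫_{|l| ≥ k_F} |F[v](k−l)|^q dl dk` is at most `C_q · k_F`. -/
theorem fluctuation_integral_upper_bound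
    (v : EuclideanSpace ℝ (Fin 2) → ℝ) (hv : ContDiff ℝ (⊤ : ℕ∞) v)
    (hsupp : HasCompactSupport v) (q : ℕ) (hq : 1 ≤ q) :
    ∃ C : ℝ, 0 < C ∧ ∀ kF : ℝ, 1 ≤ kF →
      (∫ k in {k : EuclideanSpace ℝ (Fin 2) | ‖k‖ ≤ kF},
        ∫ l in {l : EuclideanSpace ℝ (Fin 2) | kF ≤ ‖l‖},
          ‖fourierTransform2 v (k - l)‖ ^ q) ≤ C * kF := by
  obtain ⟨D, hD, hdecay⟩ := fourier_decay v hv hsupp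
  -- the majorant
  set h : E2 → ℝ := fun ξ => D ^ q / (1 + ‖ξ‖) ^ 4 with hh_def
  have hh_cont : Continuous h := by
    apply Continuous.div continuous_const
    · exact (continuous_const.add continuous_norm).pow 4
    · intro x; positivity
  have hh_nonneg : ∀ ξ, 0 ≤ h ξ := fun ξ => by positivity
  have hgh : ∀ ξ : E2, ‖fourierTransform2 v ξ‖ ^ q ≤ h ξ := by
    intro ξ
    have h1 : ‖fourierTransform2 v ξ‖ ^ q ≤ (D / (1 + ‖ξ‖) ^ 4) ^ q :=
      pow_le_pow_left₀ (norm_nonneg _) (hdecay ξ) q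
    have h2 : (D / (1 + ‖ξ‖) ^ 4) ^ q = D ^ q / (1 + ‖ξ‖) ^ (4 * q) := by
      rw [div_pow, ← pow_mul]
    have h3 : (1 + ‖ξ‖) ^ 4 ≤ (1 + ‖ξ‖) ^ (4 * q) :=
      pow_le_pow_right₀ (by linarith [norm_nonneg ξ]) (by omega)
    have h4 : D ^ q / (1 + ‖ξ‖) ^ (4 * q) ≤ D ^ q / (1 + ‖ξ‖) ^ 4 :=
      div_le_div_of_nonneg_left (by positivity) (by positivity) h3
    calc ‖fourierTransform2 v ξ‖ ^ q ≤ (D / (1 + ‖ξ‖) ^ 4) ^ q := h1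
      _ = D ^ q / (1 + ‖ξ‖) ^ (4 * q) := h2
      _ ≤ h ξ := h4
  -- integrability of h and of ‖ξ‖ • h
  have hfr : (Module.finrank ℝ E2 : ℝ) = 2 := by simp
  have hint4 : Integrable (fun ξ : E2 => (1 + ‖ξ‖) ^ (-(4:ℝ))) :=
    integrable_one_add_norm (by rw [hfr]; norm_num)
  have hrw4 : ∀ ξ : E2, (1 + ‖ξ‖) ^ (-(4:ℝ)) = ((1 + ‖ξ‖) ^ 4)⁻¹ := by
    intro ξ
    rw [Real.rpow_neg (by positivity), show ((4:ℝ)) = ((4:ℕ):ℝ) by norm_num,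
      Real.rpow_natCast]
  have hint_h : Integrable h := by
    have := hint4.const_mul (D ^ q)
    apply this.congr
    filter_upwards with ξ
    rw [hrw4 ξ]
    simp only [hh_def]
    ring
  have hint3 : Integrable (fun ξ : E2 => (1 + ‖ξ‖) ^ (-(3:ℝ))) :=
    integrable_one_add_norm (by rw [hfr]; norm_num)
  have hint_wh : Integrable (fun ξ : E2 => ‖ξ‖ * h ξ) := by
    apply Integrable.mono' (hint3.const_mul (D ^ q))
    · exact (continuous_norm.mul hh_cont).aestronglyMeasurable
    · filter_upwards with ξ
      have h0 : (0:ℝ) < 1 + ‖ξ‖ := by linarith [norm_nonneg ξ]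
      rw [Real.norm_eq_abs, abs_of_nonneg (by positivity)]
      rw [Real.rpow_neg h0.le, show ((3:ℝ)) = ((3:ℕ):ℝ) by norm_num, Real.rpow_natCast]
      simp only [hh_def]
      rw [div_eq_mul_inv, ← mul_assoc, mul_comm ‖ξ‖ (D^q), mul_assoc]
      apply mul_le_mul_of_nonneg_left _ (by positivity)
      rw [mul_inv_le_iff₀ (by positivity)]
      have heq : (1+‖ξ‖)^4 * ((1+‖ξ‖)^3)⁻¹ = 1+‖ξ‖ := by
        field_simp
      rw [mul_comm ((1+‖ξ‖)^3)⁻¹, heq]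
      linarith [norm_nonneg ξ]
  set W : ℝ := ∫ ξ : E2, ‖ξ‖ * h ξ with hW_def
  have hWnn : 0 ≤ W := integral_nonneg fun ξ => mul_nonneg (norm_nonneg _) (hh_nonneg ξ)
  refine ⟨2 * π * W + 1, by positivity, fun kF hkF => ?_⟩
  have hkF0 : (0:ℝ) ≤ kF := by linarith
  set K : Set E2 := {k | ‖k‖ ≤ kF} with hK_def
  set L : Set E2 := {l | kF ≤ ‖l‖} with hL_def
  have hKball : K = Metric.closedBall (0:E2) kF := by
    ext k; simp [hK_def, dist_eq_norm]
  have hK_meas : MeasurableSet K := by rw [hKball]; exact measurableSet_closedBall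
  haveI : IsFiniteMeasure (volume.restrict K) := by
    constructor
    rw [Measure.restrict_apply_univ, hKball]
    exact measure_closedBall_lt_top
  set G : E2 × E2 → ℝ := fun p => if kF ≤ ‖p.1 - p.2‖ then h p.2 else 0 with hG_def
  have hS_meas : MeasurableSet {p : E2 × E2 | kF ≤ ‖p.1 - p.2‖} :=
    measurableSet_le measurable_const (continuous_fst.sub continuous_snd).norm.measurable
  have hG_eq : G = Set.indicator {p : E2 × E2 | kF ≤ ‖p.1 - p.2‖} (fun p => h p.2) := by
    funext p; simp [hG_def, Set.indicator_apply]
  have hG_aesm : AEStronglyMeasurable G ((volume.restrict K).prod volume) := by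
    rw [hG_eq]
    exact ((hh_cont.comp continuous_snd).measurable.indicator hS_meas).aestronglyMeasurable
  have hG_int_slice : ∀ k : E2, Integrable (fun ξ => G (k, ξ)) volume := by
    intro k
    have heq : (fun ξ => G (k, ξ)) = Set.indicator {ξ : E2 | kF ≤ ‖k - ξ‖} h := by
      funext ξ; simp [hG_def, Set.indicator_apply]
    rw [heq]
    exact hint_h.indicator
      (measurableSet_le measurable_const (continuous_const.sub continuous_id).norm.measurable)
  have hG_slice_le : ∀ k : E2, (∫ ξ, ‖G (k, ξ)‖) ≤ ∫ ξ : E2, h ξ := by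
    intro k
    apply integral_mono_of_nonneg (Filter.Eventually.of_forall fun ξ => norm_nonneg _) hint_h
    filter_upwards with ξ
    simp only [hG_def]
    split_ifs with hcase
    · rw [Real.norm_eq_abs, abs_of_nonneg (hh_nonneg ξ)]
    · simpa using hh_nonneg ξ
  have hG_int : Integrable G ((volume.restrict K).prod volume) := by
    rw [integrable_prod_iff hG_aesm]
    refine ⟨Filter.Eventually.of_forall fun k => hG_int_slice k, ?_⟩
    apply Integrable.mono' (integrable_const (∫ ξ : E2, h ξ))
    · exact hG_aesm.norm.integral_prod_right'
    · filter_upwards with k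
      rw [Real.norm_eq_abs, abs_of_nonneg (integral_nonneg fun ξ => norm_nonneg _)]
      exact hG_slice_le k
  have step1 : ∀ k : E2, (∫ l in L, ‖fourierTransform2 v (k - l)‖ ^ q) ≤ ∫ ξ, G (k, ξ) := by
    intro k
    have hfun : (fun l : E2 => k - l) = fun l : E2 => k + (-l) := by
      funext l; rw [sub_eq_add_neg]
    have hemb : MeasurableEmbedding (fun l : E2 => k - l) := by
      rw [hfun]
      exact ((Homeomorph.neg E2).trans (Homeomorph.addLeft k)).measurableEmbedding
    have hmp : MeasurePreserving (fun l : E2 => k - l) volume volume :=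
      Measure.measurePreserving_sub_left volume k
    have hS'_meas : MeasurableSet {ξ : E2 | kF ≤ ‖k - ξ‖} :=
      measurableSet_le measurable_const (continuous_const.sub continuous_id).norm.measurable
    have hpre : (fun l : E2 => k - l) ⁻¹' {ξ : E2 | kF ≤ ‖k - ξ‖} = L := by
      ext l; simp [hL_def, sub_sub_cancel]
    have hmap : (∫ l in L, h (k - l)) = ∫ ξ in {ξ : E2 | kF ≤ ‖k - ξ‖}, h ξ := by
      rw [← hpre, hmp.setIntegral_preimage_emb hemb]
    have hint_hk : IntegrableOn (fun l => h (k - l)) L :=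
      ((hmp.integrable_comp_emb hemb).2 hint_h).integrableOn
    have h1 : (∫ l in L, ‖fourierTransform2 v (k - l)‖ ^ q) ≤ ∫ l in L, h (k - l) := by
      apply integral_mono_of_nonneg (Filter.Eventually.of_forall fun l => by positivity) hint_hk
      exact Filter.Eventually.of_forall fun l => hgh (k - l)
    have h2 : (∫ ξ in {ξ : E2 | kF ≤ ‖k - ξ‖}, h ξ) = ∫ ξ, G (k, ξ) := by
      rw [← integral_indicator hS'_meas]
      congr 1
    rw [← h2, ← hmap]
    exact h1
  have step2 : (∫ k in K, ∫ l in L, ‖fourierTransform2 v (k - l)‖ ^ q)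
      ≤ ∫ k in K, ∫ ξ, G (k, ξ) := by
    apply integral_mono_of_nonneg
    · exact Filter.Eventually.of_forall fun k => integral_nonneg fun l => by positivity
    · exact hG_int.integral_prod_left
    · exact Filter.Eventually.of_forall step1
  have hswap : (∫ k in K, ∫ ξ, G (k, ξ)) = ∫ ξ, ∫ k in K, G (k, ξ) :=
    integral_integral_swap hG_int
  have inner_eq : ∀ ξ : E2, (∫ k in K, G (k, ξ))
      = (volume (K ∩ {k : E2 | kF ≤ ‖k - ξ‖})).toReal * h ξ := by
    intro ξ
    have hmeas : MeasurableSet {k : E2 | kF ≤ ‖k - ξ‖} :=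
      measurableSet_le measurable_const
        ((continuous_id.sub continuous_const).norm.measurable)
    have heq : (fun k => G (k, ξ)) = Set.indicator {k : E2 | kF ≤ ‖k - ξ‖} (fun _ => h ξ) := by
      funext k; simp [hG_def, Set.indicator_apply]
    rw [heq, integral_indicator hmeas, Measure.restrict_restrict hmeas, setIntegral_const,
      Set.inter_comm, smul_eq_mul, Measure.real_def]
  have step3 : (∫ ξ, ∫ k in K, G (k, ξ)) ≤ ∫ ξ : E2, (2 * π * kF) * (‖ξ‖ * h ξ) := by
    apply integral_mono_of_nonneg
    · refine Filter.Eventually.of_forall fun ξ => ?_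
      show (0:ℝ) ≤ ∫ k in K, G (k, ξ)
      rw [inner_eq ξ]
      exact mul_nonneg ENNReal.toReal_nonneg (hh_nonneg ξ)
    · exact hint_wh.const_mul _
    · filter_upwards with ξ
      show (∫ k in K, G (k, ξ)) ≤ (2 * π * kF) * (‖ξ‖ * h ξ)
      rw [inner_eq ξ]
      have hvb : (volume (K ∩ {k : E2 | kF ≤ ‖k - ξ‖})).toReal ≤ 2 * π * (kF * ‖ξ‖) := by
        rw [hK_def]
        exact vol_bound kF hkF0 ξ
      calc (volume (K ∩ {k : E2 | kF ≤ ‖k - ξ‖})).toReal * h ξ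
          ≤ (2 * π * (kF * ‖ξ‖)) * h ξ := mul_le_mul_of_nonneg_right hvb (hh_nonneg ξ)
        _ = (2 * π * kF) * (‖ξ‖ * h ξ) := by ring
  have final_eq : (∫ ξ : E2, (2 * π * kF) * (‖ξ‖ * h ξ)) = (2 * π * kF) * W := by
    rw [hW_def]
    exact integral_const_mul _ _
  calc (∫ k in K, ∫ l in L, ‖fourierTransform2 v (k - l)‖ ^ q)
      ≤ ∫ k in K, ∫ ξ, G (k, ξ) := step2
    _ = ∫ ξ, ∫ k in K, G (k, ξ) := hswap
    _ ≤ ∫ ξ : E2, (2 * π * kF) * (‖ξ‖ * h ξ) := step3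
    _ = (2 * π * kF) * W := final_eq
    _ = (2 * π * W) * kF := by ring
    _ ≤ (2 * π * W + 1) * kF := by nlinarith
end

section
/- Let v : ℝ² → ℝ be smooth and compactly supported, let 0 < ε < 1/2, and let q ≥ 1 be an integer. Then there exists a constant C_{ε,q} > 0 such that for every ρ ≥ 1 (with k_F = √(4πρ)), ∫_{{k ∈ ℝ² : |k| ≤ k_F}} ∫_{{l ∈ ℝ² : |l| ≥ k_F, |k − l| ≥ ρ^ε}} |F[v](k − l)|^q dl dk ≤ C_{ε,q} · ρ^{−1/ε}. (This is estimate (2.38) of the paper: contributions from momentum transfer of size at least ρ^ε are negligible, by the rapid decay of the Fourier transform of a smooth compactly supported function.) -/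
open MeasureTheory Real SchwartzMap
open scoped FourierTransform

set_option maxHeartbeats 1000000

lemma ft2_decay (v : EuclideanSpace ℝ (Fin 2) → ℝ) (hv : ContDiff ℝ (⊤ : ℕ∞) v)
    (hsupp : HasCompactSupport v) (m : ℕ) :
    ∃ C : ℝ, 0 < C ∧ ∀ ξ, ‖fourierTransform2 v ξ‖ * (1 + ‖ξ‖) ^ m ≤ C := by
  have hw_smooth : ContDiff ℝ (⊤ : ℕ∞) (fun x : EuclideanSpace ℝ (Fin 2) => (v x : ℂ)) :=
    Complex.ofRealCLM.contDiff.comp hv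
  have hw_supp : HasCompactSupport (fun x : EuclideanSpace ℝ (Fin 2) => (v x : ℂ)) :=
    hsupp.comp_left (g := Complex.ofReal) Complex.ofReal_zero
  let s : SchwartzMap (EuclideanSpace ℝ (Fin 2)) ℂ :=
    { toFun := fun x => (v x : ℂ)
      smooth' := hw_smooth.of_le (by simp)
      decay' := by
        intro k n
        have hdn : HasCompactSupport (fun x : EuclideanSpace ℝ (Fin 2) =>
            ‖x‖ ^ k * ‖iteratedFDeriv ℝ n (fun x : EuclideanSpace ℝ (Fin 2) => (v x : ℂ)) x‖) :=
          ((hw_supp.iteratedFDeriv n).norm).mul_left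
        obtain ⟨C, hC⟩ := hdn.exists_bound_of_continuous
          ((continuous_norm.pow k).mul
            ((hw_smooth.continuous_iteratedFDeriv (by exact_mod_cast le_top)).norm))
        exact ⟨C, fun x => le_trans (le_abs_self _) (hC x)⟩ }
  let sF := SchwartzMap.fourierTransformCLM ℂ s
  set D : ℝ := 2 ^ m * (Finset.Iic ((m, 0) : ℕ × ℕ)).sup
      (fun p => SchwartzMap.seminorm ℝ p.1 p.2) sF with hD
  have hbound : ∀ x, (1 + ‖x‖) ^ m * ‖sF x‖ ≤ D := by
    intro x
    have := SchwartzMap.one_add_le_sup_seminorm_apply (𝕜 := ℝ) (m := (m, 0))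
      le_rfl le_rfl sF x
    rwa [norm_iteratedFDeriv_zero] at this
  have hDnn : 0 ≤ D := le_trans (by positivity) (hbound 0)
  have key : ∀ ξ, fourierTransform2 v ξ = sF ((2 * π)⁻¹ • ξ) := by
    intro ξ
    have : sF ((2 * π)⁻¹ • ξ)
        = 𝓕 (fun x : EuclideanSpace ℝ (Fin 2) => (v x : ℂ)) ((2 * π)⁻¹ • ξ) := rfl
    rw [this, Real.fourier_eq']
    unfold fourierTransform2
    congr 1
    funext x
    rw [real_inner_smul_right, real_inner_comm, smul_eq_mul]
    congr 1
    have hπ : (π : ℝ) ≠ 0 := Real.pi_ne_zero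
    have h2 : -2 * π * ((2 * π)⁻¹ * (inner ℝ x ξ : ℝ)) = -(inner ℝ x ξ : ℝ) := by
      field_simp
    rw [h2]
    push_cast
    ring
  refine ⟨(2 * π) ^ m * D + 1, by positivity, fun ξ => ?_⟩
  have h2π : (1 : ℝ) ≤ 2 * π := by nlinarith [Real.pi_gt_three]
  have hnx : ‖ξ‖ = (2 * π) * ‖(2 * π)⁻¹ • ξ‖ := by
    rw [norm_smul, norm_inv, Real.norm_eq_abs, abs_of_pos (by positivity : (0:ℝ) < 2 * π)]
    field_simp
  have h1 : (1 + ‖ξ‖) ^ m ≤ (2 * π) ^ m * (1 + ‖(2 * π)⁻¹ • ξ‖) ^ m := by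
    rw [← mul_pow]
    apply pow_le_pow_left₀ (by positivity)
    rw [hnx]; nlinarith [norm_nonneg ((2 * π)⁻¹ • ξ)]
  calc ‖fourierTransform2 v ξ‖ * (1 + ‖ξ‖) ^ m
      ≤ ‖sF ((2 * π)⁻¹ • ξ)‖ * ((2 * π) ^ m * (1 + ‖(2 * π)⁻¹ • ξ‖) ^ m) := by
        rw [key ξ]; exact mul_le_mul_of_nonneg_left h1 (norm_nonneg _)
    _ = (2 * π) ^ m * ((1 + ‖(2 * π)⁻¹ • ξ‖) ^ m * ‖sF ((2 * π)⁻¹ • ξ)‖) := by ring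
    _ ≤ (2 * π) ^ m * D := by
        exact mul_le_mul_of_nonneg_left (hbound _) (by positivity)
    _ ≤ (2 * π) ^ m * D + 1 := by linarith

/-- Estimate (2.38): contributions from momentum transfer at least `ρ^ε` are negligible.
With `k_F = √(4πρ)`,
`∫_{|k| ≤ k_F} ∫_{|l| ≥ k_F, |k−l| ≥ ρ^ε} |F[v](k−l)|^q dl dk ≤ C_{ε,q} ρ^{−1/ε}`. -/
theorem large_momentum_transfer_bound
    (v : EuclideanSpace ℝ (Fin 2) → ℝ) (hv : ContDiff ℝ (⊤ : ℕ∞) v)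
    (hsupp : HasCompactSupport v)
    (ε : ℝ) (hε0 : 0 < ε) (hε : ε < 1/2) (q : ℕ) (hq : 1 ≤ q) :
    ∃ C : ℝ, 0 < C ∧ ∀ ρ : ℝ, 1 ≤ ρ →
      (∫ k in {k : EuclideanSpace ℝ (Fin 2) | ‖k‖ ≤ Real.sqrt (4 * π * ρ)},
        ∫ l in {l : EuclideanSpace ℝ (Fin 2) |
            Real.sqrt (4 * π * ρ) ≤ ‖l‖ ∧ ρ ^ ε ≤ ‖k - l‖},
          ‖fourierTransform2 v (k - l)‖ ^ q) ≤ C * ρ ^ (-(1/ε)) := by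
  set m : ℕ := 3 + ⌈(1 + 1/ε) / ε⌉₊ with hm
  obtain ⟨C, hCpos, hdecay⟩ := ft2_decay v hv hsupp m
  -- the integrable comparison function
  have hfin : (Module.finrank ℝ (EuclideanSpace ℝ (Fin 2)) : ℝ) < 3 := by
    simp [finrank_euclideanSpace_fin]; norm_num
  have hI : Integrable (fun x : EuclideanSpace ℝ (Fin 2) => (1 + ‖x‖) ^ (-(3:ℝ))) :=
    integrable_one_add_norm hfin
  set I : ℝ := ∫ x : EuclideanSpace ℝ (Fin 2), (1 + ‖x‖) ^ (-(3:ℝ)) with hIdef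
  have hInn : 0 ≤ I := integral_nonneg (fun x => by positivity)
  set c1 : ℝ := (volume (Metric.ball (0 : EuclideanSpace ℝ (Fin 2)) 1)).toReal with hc1
  have hc1nn : 0 ≤ c1 := ENNReal.toReal_nonneg
  set s : ℝ := (m : ℝ) * q - 3 with hs
  have hs0 : 0 ≤ s := by
    have : (3:ℝ) ≤ (m:ℝ) := by
      have : (3:ℕ) ≤ m := by omega
      exact_mod_cast this
    have hq1 : (1:ℝ) ≤ (q:ℝ) := by exact_mod_cast hq
    nlinarith
  have hεs : 1 + 1/ε ≤ ε * s := by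
    have h1 : (1 + 1/ε) / ε ≤ (⌈(1 + 1/ε) / ε⌉₊ : ℝ) := Nat.le_ceil _
    have hq1 : (1:ℝ) ≤ (q:ℝ) := by exact_mod_cast hq
    have hm' : (m:ℝ) = 3 + (⌈(1 + 1/ε) / ε⌉₊ : ℝ) := by exact_mod_cast hm
    have hcnn : (0:ℝ) ≤ (⌈(1 + 1/ε) / ε⌉₊ : ℝ) := Nat.cast_nonneg _
    have hms : (1 + 1/ε) / ε ≤ s := by
      have : (m:ℝ) ≤ (m:ℝ) * q := le_mul_of_one_le_right (by positivity) hq1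
      nlinarith
    calc 1 + 1/ε = (1 + 1/ε) / ε * ε := by
          rw [div_mul_cancel₀ _ (ne_of_gt hε0)]
      _ ≤ s * ε := by nlinarith
      _ = ε * s := by ring
  refine ⟨C ^ q * I * (4 * π * c1) + 1, by positivity, fun ρ hρ => ?_⟩
  have hρ0 : (0:ℝ) < ρ := lt_of_lt_of_le one_pos hρ
  have hρε1 : (1:ℝ) ≤ ρ ^ ε := by
    calc (1:ℝ) = 1 ^ ε := (Real.one_rpow ε).symm
      _ ≤ ρ ^ ε := Real.rpow_le_rpow zero_le_one hρ hε0.le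
  have hρε0 : (0:ℝ) < ρ ^ ε := lt_of_lt_of_le one_pos hρε1
  set kF : ℝ := Real.sqrt (4 * π * ρ) with hkF
  -- inner bound
  set B : ℝ := C ^ q * ρ ^ (-(ε * s)) * I with hB
  have inner_bound : ∀ k : EuclideanSpace ℝ (Fin 2),
      (∫ l in {l : EuclideanSpace ℝ (Fin 2) | kF ≤ ‖l‖ ∧ ρ ^ ε ≤ ‖k - l‖},
        ‖fourierTransform2 v (k - l)‖ ^ q) ≤ B := by
    intro k
    set S : Set (EuclideanSpace ℝ (Fin 2)) := {l | kF ≤ ‖l‖ ∧ ρ ^ ε ≤ ‖k - l‖} with hS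
    have hSm : MeasurableSet S := by
      apply MeasurableSet.inter
      · exact measurableSet_le measurable_const measurable_norm
      · exact measurableSet_le measurable_const ((measurable_id.const_sub k).norm)
    set g : EuclideanSpace ℝ (Fin 2) → ℝ :=
      fun l => C ^ q * ρ ^ (-(ε * s)) * (1 + ‖k - l‖) ^ (-(3:ℝ)) with hg
    have hgi : Integrable g := ((hI.comp_sub_left k).const_mul _)
    have hptwise : ∀ l ∈ S, ‖fourierTransform2 v (k - l)‖ ^ q ≤ g l := by
      intro l hl
      obtain ⟨-, hl2⟩ := hl
      set t : ℝ := ‖k - l‖ with ht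
      have ht0 : 0 ≤ t := norm_nonneg _
      have hu : (0:ℝ) < 1 + t := by linarith
      have h1 : ‖fourierTransform2 v (k - l)‖ ≤ C * (1 + t) ^ (-(m:ℝ)) := by
        rw [Real.rpow_neg hu.le, Real.rpow_natCast, ← div_eq_mul_inv,
          le_div_iff₀ (by positivity : (0:ℝ) < (1+t)^m)]
        exact hdecay (k - l)
      have h2 : ‖fourierTransform2 v (k - l)‖ ^ q ≤ (C * (1 + t) ^ (-(m:ℝ))) ^ q :=
        pow_le_pow_left₀ (norm_nonneg _) h1 q
      have h3 : (C * (1 + t) ^ (-(m:ℝ))) ^ q = C ^ q * (1 + t) ^ (-((m:ℝ) * q)) := by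
        rw [mul_pow, ← Real.rpow_natCast ((1+t) ^ (-(m:ℝ))) q, ← Real.rpow_mul hu.le]
        ring_nf
      have h4 : (1 + t) ^ (-((m:ℝ) * q)) = (1 + t) ^ (-s) * (1 + t) ^ (-(3:ℝ)) := by
        rw [← Real.rpow_add hu]
        congr 1
        rw [hs]; ring
      have h5 : (1 + t) ^ (-s) ≤ (ρ ^ ε) ^ (-s) := by
        apply Real.rpow_le_rpow_of_nonpos hρε0 (by linarith) (by linarith)
      have h6 : ((ρ:ℝ) ^ ε) ^ (-s) = ρ ^ (-(ε * s)) := by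
        rw [← Real.rpow_mul hρ0.le, mul_neg]
      calc ‖fourierTransform2 v (k - l)‖ ^ q
          ≤ C ^ q * ((1 + t) ^ (-s) * (1 + t) ^ (-(3:ℝ))) := by rw [← h4, ← h3]; exact h2
        _ ≤ C ^ q * (ρ ^ (-(ε * s)) * (1 + t) ^ (-(3:ℝ))) := by
            rw [← h6]
            have : (0:ℝ) ≤ (1 + t) ^ (-(3:ℝ)) := by positivity
            have hCq : (0:ℝ) ≤ C ^ q := by positivity
            nlinarith [mul_le_mul_of_nonneg_right h5 this]
        _ = g l := by rw [hg]; ring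
    calc (∫ l in S, ‖fourierTransform2 v (k - l)‖ ^ q)
        ≤ ∫ l in S, g l := by
          apply integral_mono_of_nonneg
          · exact Filter.Eventually.of_forall (fun l => by positivity)
          · exact hgi.restrict
          · exact (ae_restrict_iff' hSm).2 (Filter.Eventually.of_forall hptwise)
      _ ≤ ∫ l, g l := by
          apply setIntegral_le_integral hgi
          exact Filter.Eventually.of_forall (fun l => by positivity)
      _ = B := by
          rw [hg, hB]
          rw [integral_const_mul]
          congr 1
          exact integral_sub_left_eq_self (fun x => (1 + ‖x‖) ^ (-(3:ℝ))) volume k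
  -- outer integral
  have hfin4 : (0:ℝ) ≤ 4 * π * ρ := by positivity
  have hkF2 : kF ^ 2 = 4 * π * ρ := Real.sq_sqrt hfin4
  have hout_set : {k : EuclideanSpace ℝ (Fin 2) | ‖k‖ ≤ kF}
      = Metric.closedBall (0 : EuclideanSpace ℝ (Fin 2)) kF := by
    ext k; simp [mem_closedBall_zero_iff]
  have hvol : (volume (Metric.closedBall (0 : EuclideanSpace ℝ (Fin 2)) kF)).toReal
      = (4 * π * ρ) * c1 := by
    rw [Measure.addHaar_closedBall _ _ (Real.sqrt_nonneg _), finrank_euclideanSpace_fin,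
      ENNReal.toReal_mul, ENNReal.toReal_ofReal (by positivity), hkF2]
  have hBnn : 0 ≤ B := by
    rw [hB]; positivity
  have houter : ‖∫ k in {k : EuclideanSpace ℝ (Fin 2) | ‖k‖ ≤ kF},
      ∫ l in {l : EuclideanSpace ℝ (Fin 2) | kF ≤ ‖l‖ ∧ ρ ^ ε ≤ ‖k - l‖},
        ‖fourierTransform2 v (k - l)‖ ^ q‖
      ≤ B * ((4 * π * ρ) * c1) := by
    rw [hout_set, ← hvol]
    apply norm_setIntegral_le_of_norm_le_const (measure_closedBall_lt_top)
    intro k _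
    rw [Real.norm_eq_abs, abs_of_nonneg (integral_nonneg (fun l => by positivity))]
    exact inner_bound k
  calc (∫ k in {k : EuclideanSpace ℝ (Fin 2) | ‖k‖ ≤ kF},
      ∫ l in {l : EuclideanSpace ℝ (Fin 2) | kF ≤ ‖l‖ ∧ ρ ^ ε ≤ ‖k - l‖},
        ‖fourierTransform2 v (k - l)‖ ^ q)
      ≤ B * ((4 * π * ρ) * c1) := le_trans (le_abs_self _) houter
    _ = (C ^ q * I * (4 * π * c1)) * (ρ ^ (-(ε * s)) * ρ) := by rw [hB]; ring
    _ ≤ (C ^ q * I * (4 * π * c1)) * ρ ^ (-(1/ε)) := by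
        apply mul_le_mul_of_nonneg_left _ (by positivity)
        have : ρ ^ (-(ε * s)) * ρ = ρ ^ (-(ε * s) + 1) := by
          rw [Real.rpow_add hρ0, Real.rpow_one]
        rw [this]
        apply Real.rpow_le_rpow_of_exponent_le hρ
        linarith
    _ ≤ (C ^ q * I * (4 * π * c1) + 1) * ρ ^ (-(1/ε)) := by
        apply mul_le_mul_of_nonneg_right _ (Real.rpow_nonneg hρ0.le _)
        linarith
end

section
/- Let 0 < ε < 1/2. Then there exist a constant C > 0 and ρ₀ > 0 such that for every ρ ≥ ρ₀, with k_F = √(4πρ), the Lebesgue measure of the set {(k,l) ∈ ℝ² × ℝ² : |k| ≤ k_F, |l| ≥ k_F, |k − l| < ρ^ε, |l| − |k| < ρ^{−1/2}} is at most (2π)⁴ · C · ρ^{−1/2 + ε}. (This is estimate (2.44) of Corollary 2.4: the phase-space volume of the stationary shell 𝔖_0 of near-resonant particle–hole excitations is of order ρ^{−1/2+ε}.) -/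
open MeasureTheory Real

local notation "E2" => EuclideanSpace ℝ (Fin 2)

/-- Volume of a "curved slab": the set of points `(x, y)` with
`|x| ≤ r` and `g x ≤ y ≤ g x + d` has volume at most `2 r d`. -/
lemma slab_volume_le (r d : ℝ) (hr : 0 ≤ r) (hd : 0 ≤ d) (g : ℝ → ℝ) (hg : Continuous g) :
    volume {p : ℝ × ℝ | |p.1| ≤ r ∧ g p.1 ≤ p.2 ∧ p.2 ≤ g p.1 + d}
      ≤ ENNReal.ofReal (2 * r * d) := by
  set S := {p : ℝ × ℝ | |p.1| ≤ r ∧ g p.1 ≤ p.2 ∧ p.2 ≤ g p.1 + d} with hS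
  have hclosed : IsClosed S := by
    have h1 : IsClosed {p : ℝ × ℝ | |p.1| ≤ r} :=
      isClosed_le continuous_fst.abs continuous_const
    have h2 : IsClosed {p : ℝ × ℝ | g p.1 ≤ p.2} :=
      isClosed_le (hg.comp continuous_fst) continuous_snd
    have h3 : IsClosed {p : ℝ × ℝ | p.2 ≤ g p.1 + d} :=
      isClosed_le continuous_snd ((hg.comp continuous_fst).add continuous_const)
    exact h1.inter (h2.inter h3)
  rw [Measure.volume_eq_prod, Measure.prod_apply hclosed.measurableSet]
  have hbd : ∀ x : ℝ, volume (Prod.mk x ⁻¹' S)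
      ≤ Set.indicator (Set.Icc (-r) r) (fun _ => ENNReal.ofReal d) x := by
    intro x
    by_cases hx : |x| ≤ r
    · have hsub : Prod.mk x ⁻¹' S ⊆ Set.Icc (g x) (g x + d) := by
        intro y hy
        exact ⟨hy.2.1, hy.2.2⟩
      have hmem : x ∈ Set.Icc (-r) r := abs_le.mp hx
      rw [Set.indicator_of_mem hmem]
      calc volume (Prod.mk x ⁻¹' S) ≤ volume (Set.Icc (g x) (g x + d)) := measure_mono hsub
        _ = ENNReal.ofReal d := by rw [Real.volume_Icc]; congr 1; ring
    · have : Prod.mk x ⁻¹' S = ∅ := by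
        ext y
        simp only [Set.mem_preimage, Set.mem_empty_iff_false, iff_false]
        intro hy
        exact hx hy.1
      rw [this, Set.indicator_of_notMem (fun hmem => hx (abs_le.mpr (Set.mem_Icc.mp hmem)))]
      simp
  calc ∫⁻ x, volume (Prod.mk x ⁻¹' S)
      ≤ ∫⁻ x, Set.indicator (Set.Icc (-r) r) (fun _ => ENNReal.ofReal d) x :=
        lintegral_mono hbd
    _ = ENNReal.ofReal d * volume (Set.Icc (-r) r) := by
        rw [lintegral_indicator measurableSet_Icc, setLIntegral_const]
    _ = ENNReal.ofReal d * ENNReal.ofReal (r - -r) := by rw [Real.volume_Icc]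
    _ ≤ ENNReal.ofReal (2 * r * d) := by
        rw [← ENNReal.ofReal_mul hd]
        exact ENNReal.ofReal_le_ofReal (by nlinarith)

set_option maxHeartbeats 1000000 in
/-- The intersection of a thin annulus `a ≤ ‖l‖ ≤ a + δ` with a ball of radius `r`
centered at a point of norm at least `a - δ` has volume at most `6 r δ`. -/
lemma annulus_cap_volume_le (a δ r : ℝ) (hδ : 0 < δ) (hδ1 : δ ≤ 1) (hr : 0 < r)
    (ha : 2 * r + 2 ≤ a) (c : E2) (hc : a - δ ≤ ‖c‖) :
    volume {l : E2 | a ≤ ‖l‖ ∧ ‖l‖ ≤ a + δ ∧ ‖l - c‖ ≤ r}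
      ≤ ENNReal.ofReal (6 * r * δ) := by
  have ha0 : (0:ℝ) < a := by linarith
  set w : E2 := (‖c‖ : ℝ) • EuclideanSpace.single (1 : Fin 2) (1:ℝ) with hw_def
  have hw_norm : ‖w‖ = ‖c‖ := by
    rw [hw_def, norm_smul, EuclideanSpace.norm_single]
    simp [abs_of_nonneg (norm_nonneg c)]
  have hw0 : w 0 = 0 := by simp [hw_def, EuclideanSpace.single_apply]
  have hw1 : w 1 = ‖c‖ := by simp [hw_def, EuclideanSpace.single_apply]
  set T := Submodule.reflection (ℝ ∙ (c - w))ᗮ with hT_def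
  have hTc : T c = w := Submodule.reflection_sub hw_norm.symm
  set ψ : E2 ≃ᵐ (ℝ × ℝ) :=
    (MeasurableEquiv.toLp 2 (Fin 2 → ℝ)).symm.trans (MeasurableEquiv.piFinTwo fun _ => ℝ)
    with hψ_def
  have hψ_mp : MeasurePreserving ψ :=
    (volume_preserving_piFinTwo fun _ => ℝ).comp
      (EuclideanSpace.volume_preserving_symm_measurableEquiv_toLp (Fin 2))
  have hΦ : MeasurePreserving (fun l : E2 => ψ (T l)) :=
    hψ_mp.comp T.measurePreserving
  set g : ℝ → ℝ := fun y => Real.sqrt (a^2 - y^2) with hg_def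
  have hg_cont : Continuous g := (continuous_const.sub (continuous_pow 2)).sqrt
  set TA : Set (ℝ × ℝ) := {p : ℝ × ℝ | |p.1| ≤ r ∧ g p.1 ≤ p.2 ∧ p.2 ≤ g p.1 + 3*δ} with hTA_def
  have hTA_closed : IsClosed TA := by
    have h1 : IsClosed {p : ℝ × ℝ | |p.1| ≤ r} :=
      isClosed_le continuous_fst.abs continuous_const
    have h2 : IsClosed {p : ℝ × ℝ | g p.1 ≤ p.2} :=
      isClosed_le (hg_cont.comp continuous_fst) continuous_snd
    have h3 : IsClosed {p : ℝ × ℝ | p.2 ≤ g p.1 + 3*δ} :=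
      isClosed_le continuous_snd ((hg_cont.comp continuous_fst).add continuous_const)
    exact h1.inter (h2.inter h3)
  have hψ_app : ∀ u : E2, ψ u = (u 0, u 1) := fun u => rfl
  have hsub : {l : E2 | a ≤ ‖l‖ ∧ ‖l‖ ≤ a + δ ∧ ‖l - c‖ ≤ r}
      ⊆ (fun l : E2 => ψ (T l)) ⁻¹' TA := by
    intro l hl
    obtain ⟨hl1, hl2, hl3⟩ := hl
    set u : E2 := T l with hu_def
    set x : ℝ := u 0 with hx_def
    set y : ℝ := u 1 with hy_def
    have hnorm_u : ‖u‖ = ‖l‖ := T.norm_map l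
    have hdist : ‖u - w‖ = ‖l - c‖ := by
      rw [hu_def, ← hTc, ← map_sub, T.norm_map]
    have hsq_dist : x^2 + (y - ‖c‖)^2 ≤ r^2 := by
      have h1 : ‖u - w‖ = Real.sqrt (x^2 + (y - ‖c‖)^2) := by
        rw [EuclideanSpace.norm_eq]
        congr 1
        rw [Fin.sum_univ_two]
        simp only [PiLp.sub_apply, hw0, hw1, Real.norm_eq_abs, sq_abs]
        ring
      have h2 : Real.sqrt (x^2 + (y - ‖c‖)^2) ≤ r := by
        rw [← h1, hdist]; exact hl3
      have h3 : (0:ℝ) ≤ x^2 + (y - ‖c‖)^2 := by positivity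
      calc x^2 + (y - ‖c‖)^2 = (Real.sqrt (x^2 + (y - ‖c‖)^2))^2 := (Real.sq_sqrt h3).symm
        _ ≤ r^2 := by nlinarith [Real.sqrt_nonneg (x^2 + (y - ‖c‖)^2)]
    have hnorm_sq : ‖u‖ = Real.sqrt (x^2 + y^2) := by
      rw [EuclideanSpace.norm_eq]
      congr 1
      rw [Fin.sum_univ_two]
      simp only [Real.norm_eq_abs, sq_abs]
      rfl
    have hxy_lb : a^2 ≤ x^2 + y^2 := by
      have h1 : a ≤ Real.sqrt (x^2 + y^2) := by rw [← hnorm_sq, hnorm_u]; exact hl1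
      have h3 : (0:ℝ) ≤ x^2 + y^2 := by positivity
      calc a^2 ≤ (Real.sqrt (x^2 + y^2))^2 := by nlinarith [Real.sqrt_nonneg (x^2+y^2)]
        _ = x^2 + y^2 := Real.sq_sqrt h3
    have hxy_ub : x^2 + y^2 ≤ (a + δ)^2 := by
      have h1 : Real.sqrt (x^2 + y^2) ≤ a + δ := by rw [← hnorm_sq, hnorm_u]; exact hl2
      have h3 : (0:ℝ) ≤ x^2 + y^2 := by positivity
      calc x^2 + y^2 = (Real.sqrt (x^2 + y^2))^2 := (Real.sq_sqrt h3).symm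
        _ ≤ (a + δ)^2 := by nlinarith [Real.sqrt_nonneg (x^2+y^2)]
    have hx_abs : |x| ≤ r := by
      have h1 : x^2 ≤ r^2 := by nlinarith [sq_nonneg (y - ‖c‖)]
      calc |x| = Real.sqrt (x^2) := (Real.sqrt_sq_eq_abs x).symm
        _ ≤ Real.sqrt (r^2) := Real.sqrt_le_sqrt h1
        _ = r := Real.sqrt_sq hr.le
    have hy_c : |y - ‖c‖| ≤ r := by
      have h1 : (y - ‖c‖)^2 ≤ r^2 := by nlinarith [sq_nonneg x]
      calc |y - ‖c‖| = Real.sqrt ((y - ‖c‖)^2) := (Real.sqrt_sq_eq_abs _).symm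
        _ ≤ Real.sqrt (r^2) := Real.sqrt_le_sqrt h1
        _ = r := Real.sqrt_sq hr.le
    have hy_pos : (0:ℝ) ≤ y := by
      have h := abs_le.mp hy_c
      linarith [h.1, hc]
    have hgx_le : g x ≤ y := by
      show Real.sqrt (a^2 - x^2) ≤ y
      have h1 : a^2 - x^2 ≤ y^2 := by linarith
      calc Real.sqrt (a^2 - x^2) ≤ Real.sqrt (y^2) := Real.sqrt_le_sqrt h1
        _ = y := Real.sqrt_sq hy_pos
    have hx_sq : x^2 ≤ a^2/4 := by
      have h1 : r ≤ a/2 := by linarith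
      have h2 : x^2 ≤ r^2 := by nlinarith [sq_nonneg (y - ‖c‖)]
      nlinarith
    have hg_lb : a/2 ≤ g x := by
      show a/2 ≤ Real.sqrt (a^2 - x^2)
      have h1 : (a/2)^2 ≤ a^2 - x^2 := by nlinarith
      calc a/2 = Real.sqrt ((a/2)^2) := (Real.sqrt_sq (by linarith)).symm
        _ ≤ Real.sqrt (a^2 - x^2) := Real.sqrt_le_sqrt h1
    have hy_ub : y ≤ g x + 3*δ := by
      have hgx_sq : (g x)^2 = a^2 - x^2 := Real.sq_sqrt (by nlinarith)
      have h1 : y^2 ≤ (g x + 3*δ)^2 := by nlinarith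
      have h2 : (0:ℝ) ≤ g x + 3*δ := by
        have := Real.sqrt_nonneg (a^2 - x^2)
        show (0:ℝ) ≤ Real.sqrt (a^2 - x^2) + 3*δ
        linarith
      calc y = Real.sqrt (y^2) := (Real.sqrt_sq hy_pos).symm
        _ ≤ Real.sqrt ((g x + 3*δ)^2) := Real.sqrt_le_sqrt h1
        _ = g x + 3*δ := Real.sqrt_sq h2
    show ψ (T l) ∈ TA
    rw [hψ_app]
    exact ⟨hx_abs, hgx_le, hy_ub⟩
  calc volume {l : E2 | a ≤ ‖l‖ ∧ ‖l‖ ≤ a + δ ∧ ‖l - c‖ ≤ r}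
      ≤ volume ((fun l : E2 => ψ (T l)) ⁻¹' TA) := measure_mono hsub
    _ = volume TA := hΦ.measure_preimage hTA_closed.measurableSet.nullMeasurableSet
    _ ≤ ENNReal.ofReal (2 * r * (3*δ)) := slab_volume_le r (3*δ) hr.le (by linarith) g hg_cont
    _ = ENNReal.ofReal (6 * r * δ) := by congr 1; ring

/-- Estimate (2.44) of Corollary 2.4: the phase-space volume of the stationary shell `𝔖_0`
of near-resonant particle–hole excitations (pairs `(k,l)` with `k` inside and `l` outside the
Fermi ball of radius `k_F = √(4πρ)`, momentum transfer `< ρ^ε`, radial gap `< ρ^{−1/2}`)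
is at most `(2π)⁴ · C · ρ^{−1/2+ε}`. -/
theorem stationary_shell_volume_bound
    (ε : ℝ) (hε0 : 0 < ε) (hε : ε < 1/2) :
    ∃ C : ℝ, 0 < C ∧ ∃ ρ₀ : ℝ, 0 < ρ₀ ∧ ∀ ρ : ℝ, ρ₀ ≤ ρ →
      volume {p : EuclideanSpace ℝ (Fin 2) × EuclideanSpace ℝ (Fin 2) |
          ‖p.1‖ ≤ Real.sqrt (4 * π * ρ) ∧ Real.sqrt (4 * π * ρ) ≤ ‖p.2‖ ∧
          ‖p.1 - p.2‖ < ρ ^ ε ∧ ‖p.2‖ - ‖p.1‖ < ρ ^ (-(1/2) : ℝ)}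
        ≤ ENNReal.ofReal ((2 * π) ^ (4:ℕ) * C * ρ ^ (-(1/2) + ε)) := by
  have hπ3 : (3:ℝ) < π := Real.pi_gt_three
  refine ⟨12 * π * Real.sqrt (4 * π) + 1, by positivity,
    max 1 ((4:ℝ) ^ ((1/2 - ε)⁻¹ : ℝ)), lt_of_lt_of_le one_pos (le_max_left _ _), ?_⟩
  intro ρ hρ
  have hρ1 : (1:ℝ) ≤ ρ := le_trans (le_max_left _ _) hρ
  have hρ0 : (0:ℝ) < ρ := lt_of_lt_of_le one_pos hρ1
  set kF := Real.sqrt (4 * π * ρ) with hkF_def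
  set δ := ρ ^ (-(1/2) : ℝ) with hδ_def
  set r := ρ ^ ε with hr_def
  have hδ0 : 0 < δ := Real.rpow_pos_of_pos hρ0 _
  have hr0 : 0 < r := Real.rpow_pos_of_pos hρ0 _
  have hδ1 : δ ≤ 1 := Real.rpow_le_one_of_one_le_of_nonpos hρ1 (by norm_num)
  have hr1 : 1 ≤ r := Real.one_le_rpow hρ1 hε0.le
  have ht : (0:ℝ) < 1/2 - ε := by linarith
  have h4 : (4:ℝ) ≤ ρ ^ ((1/2 - ε) : ℝ) := by
    have hb : (4:ℝ) ^ ((1/2 - ε)⁻¹ : ℝ) ≤ ρ := le_trans (le_max_right _ _) hρ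
    calc (4:ℝ) = ((4:ℝ) ^ ((1/2 - ε)⁻¹ : ℝ)) ^ ((1/2 - ε) : ℝ) := by
          rw [← Real.rpow_mul (by norm_num), inv_mul_cancel₀ ht.ne', Real.rpow_one]
      _ ≤ ρ ^ ((1/2 - ε) : ℝ) := Real.rpow_le_rpow (by positivity) hb ht.le
  have hkF_eq : kF = Real.sqrt (4 * π) * ρ ^ ((1/2:ℝ)) := by
    rw [hkF_def, show 4 * π * ρ = (4 * π) * ρ by ring, Real.sqrt_mul (by positivity) ρ,
      Real.sqrt_eq_rpow ρ]
  have hρhalf_pos : (0:ℝ) < ρ ^ ((1/2:ℝ)) := Real.rpow_pos_of_pos hρ0 _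
  have hkFδ : kF * δ = Real.sqrt (4 * π) := by
    rw [hkF_eq, hδ_def, mul_assoc, ← Real.rpow_add hρ0]
    norm_num
  have h3 : (3:ℝ) ≤ Real.sqrt (4 * π) := by
    have h9 : (9:ℝ) ≤ 4 * π := by nlinarith
    calc (3:ℝ) = Real.sqrt 9 := by
          rw [show (9:ℝ) = 3^2 by norm_num, Real.sqrt_sq (by norm_num : (0:ℝ) ≤ 3)]
      _ ≤ Real.sqrt (4 * π) := Real.sqrt_le_sqrt h9
  have h12 : 4 * r ≤ ρ ^ ((1/2:ℝ)) := by
    have heq : ρ ^ ((1/2:ℝ)) = r * ρ ^ ((1/2 - ε):ℝ) := by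
      rw [hr_def, ← Real.rpow_add hρ0]; ring_nf
    rw [heq]
    nlinarith
  have hkF_big : 2 * r + 2 ≤ kF := by
    have hmul : 3 * ρ^((1/2:ℝ)) ≤ Real.sqrt (4*π) * ρ^((1/2:ℝ)) :=
      mul_le_mul_of_nonneg_right h3 hρhalf_pos.le
    rw [hkF_eq]
    linarith
  have hkF0 : (0:ℝ) < kF := by linarith
  set S' : Set (E2 × E2) := {p : E2 × E2 |
      (kF - δ ≤ ‖p.1‖ ∧ ‖p.1‖ ≤ kF) ∧ (kF ≤ ‖p.2‖ ∧ ‖p.2‖ ≤ kF + δ) ∧ ‖p.1 - p.2‖ ≤ r}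
      with hS'_def
  have hsubS : {p : E2 × E2 |
      ‖p.1‖ ≤ kF ∧ kF ≤ ‖p.2‖ ∧ ‖p.1 - p.2‖ < r ∧ ‖p.2‖ - ‖p.1‖ < δ} ⊆ S' := by
    intro p hp
    obtain ⟨h1, h2, h3', h4'⟩ := hp
    exact ⟨⟨by linarith, h1⟩, ⟨h2, by linarith⟩, h3'.le⟩
  have hS'_closed : IsClosed S' := by
    have c1 : IsClosed {p : E2 × E2 | kF - δ ≤ ‖p.1‖} :=
      isClosed_le continuous_const continuous_fst.norm
    have c2 : IsClosed {p : E2 × E2 | ‖p.1‖ ≤ kF} :=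
      isClosed_le continuous_fst.norm continuous_const
    have c3 : IsClosed {p : E2 × E2 | kF ≤ ‖p.2‖} :=
      isClosed_le continuous_const continuous_snd.norm
    have c4 : IsClosed {p : E2 × E2 | ‖p.2‖ ≤ kF + δ} :=
      isClosed_le continuous_snd.norm continuous_const
    have c5 : IsClosed {p : E2 × E2 | ‖p.1 - p.2‖ ≤ r} :=
      isClosed_le (continuous_fst.sub continuous_snd).norm continuous_const
    exact (c1.inter c2).inter ((c3.inter c4).inter c5)
  set A : Set E2 := {k : E2 | kF - δ ≤ ‖k‖ ∧ ‖k‖ ≤ kF} with hA_def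
  have hA_closed : IsClosed A := by
    have c1 : IsClosed {k : E2 | kF - δ ≤ ‖k‖} := isClosed_le continuous_const continuous_norm
    have c2 : IsClosed {k : E2 | ‖k‖ ≤ kF} := isClosed_le continuous_norm continuous_const
    exact c1.inter c2
  have hfiber : ∀ k : E2, volume (Prod.mk k ⁻¹' S')
      ≤ Set.indicator A (fun _ => ENNReal.ofReal (6 * r * δ)) k := by
    intro k
    by_cases hk : k ∈ A
    · rw [Set.indicator_of_mem hk]
      have hsub2 : Prod.mk k ⁻¹' S' ⊆ {l : E2 | kF ≤ ‖l‖ ∧ ‖l‖ ≤ kF + δ ∧ ‖l - k‖ ≤ r} := by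
        intro l hl
        exact ⟨hl.2.1.1, hl.2.1.2, by rw [norm_sub_rev]; exact hl.2.2⟩
      calc volume (Prod.mk k ⁻¹' S')
          ≤ volume {l : E2 | kF ≤ ‖l‖ ∧ ‖l‖ ≤ kF + δ ∧ ‖l - k‖ ≤ r} := measure_mono hsub2
        _ ≤ ENNReal.ofReal (6 * r * δ) :=
            annulus_cap_volume_le kF δ r hδ0 hδ1 hr0 hkF_big k hk.1
    · rw [Set.indicator_of_notMem hk]
      have hempty : Prod.mk k ⁻¹' S' = ∅ := by
        ext l
        simp only [Set.mem_preimage, Set.mem_empty_iff_false, iff_false]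
        intro hl
        exact hk ⟨hl.1.1, hl.1.2⟩
      rw [hempty]
      simp
  have hvolball : ∀ R : ℝ, 0 ≤ R →
      volume (Metric.closedBall (0:E2) R) = ENNReal.ofReal (R^2 * π) ∧
      volume (Metric.ball (0:E2) R) = ENNReal.ofReal (R^2 * π) := by
    intro R hR
    constructor
    · rw [EuclideanSpace.volume_closedBall]
      simp only [Fintype.card_fin]
      rw [show ((2:ℕ):ℝ) / 2 + 1 = 2 by norm_num, Real.Gamma_two, div_one,
        Real.sq_sqrt Real.pi_nonneg, ← ENNReal.ofReal_pow hR,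
        ← ENNReal.ofReal_mul (by positivity)]
    · rw [EuclideanSpace.volume_ball]
      simp only [Fintype.card_fin]
      rw [show ((2:ℕ):ℝ) / 2 + 1 = 2 by norm_num, Real.Gamma_two, div_one,
        Real.sq_sqrt Real.pi_nonneg, ← ENNReal.ofReal_pow hR,
        ← ENNReal.ofReal_mul (by positivity)]
  have hA_vol : volume A ≤ ENNReal.ofReal (2 * π * kF * δ) := by
    have hkFδ0 : (0:ℝ) ≤ kF - δ := by linarith
    have hsubA : A ⊆ Metric.closedBall (0:E2) kF \ Metric.ball (0:E2) (kF - δ) := by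
      intro k hk
      constructor
      · rw [Metric.mem_closedBall, dist_zero_right]; exact hk.2
      · rw [Metric.mem_ball, dist_zero_right]; push_neg; exact hk.1
    have hball_sub : Metric.ball (0:E2) (kF - δ) ⊆ Metric.closedBall (0:E2) kF :=
      Metric.ball_subset_closedBall.trans (Metric.closedBall_subset_closedBall (by linarith))
    have hvb := (hvolball (kF - δ) hkFδ0).2
    have hvcb := (hvolball kF hkF0.le).1
    have hball_fin : volume (Metric.ball (0:E2) (kF - δ)) ≠ ⊤ := by
      rw [hvb]; exact ENNReal.ofReal_ne_top
    calc volume A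
        ≤ volume (Metric.closedBall (0:E2) kF \ Metric.ball (0:E2) (kF - δ)) :=
          measure_mono hsubA
      _ = volume (Metric.closedBall (0:E2) kF) - volume (Metric.ball (0:E2) (kF - δ)) :=
          measure_diff hball_sub measurableSet_ball.nullMeasurableSet hball_fin
      _ = ENNReal.ofReal (kF^2 * π) - ENNReal.ofReal ((kF - δ)^2 * π) := by rw [hvb, hvcb]
      _ ≤ ENNReal.ofReal (2 * π * kF * δ) := by
          rw [← ENNReal.ofReal_sub _ (by positivity)]
          apply ENNReal.ofReal_le_ofReal
          nlinarith [mul_nonneg Real.pi_pos.le (sq_nonneg δ)]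
  calc volume {p : E2 × E2 |
        ‖p.1‖ ≤ kF ∧ kF ≤ ‖p.2‖ ∧ ‖p.1 - p.2‖ < r ∧ ‖p.2‖ - ‖p.1‖ < δ}
      ≤ volume S' := measure_mono hsubS
    _ = ∫⁻ k, volume (Prod.mk k ⁻¹' S') := by
        rw [Measure.volume_eq_prod, Measure.prod_apply hS'_closed.measurableSet]
    _ ≤ ∫⁻ k, Set.indicator A (fun _ => ENNReal.ofReal (6 * r * δ)) k := lintegral_mono hfiber
    _ = ENNReal.ofReal (6 * r * δ) * volume A := by
        rw [lintegral_indicator hA_closed.measurableSet, setLIntegral_const]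
    _ ≤ ENNReal.ofReal (6 * r * δ) * ENNReal.ofReal (2 * π * kF * δ) :=
        mul_le_mul_right hA_vol _
    _ = ENNReal.ofReal ((6 * r * δ) * (2 * π * kF * δ)) :=
        (ENNReal.ofReal_mul (by positivity)).symm
    _ ≤ ENNReal.ofReal ((2 * π) ^ (4:ℕ) * (12 * π * Real.sqrt (4 * π) + 1)
          * ρ ^ (-(1/2) + ε)) := by
        apply ENNReal.ofReal_le_ofReal
        have hrδ : r * δ = ρ ^ ((-(1/2) + ε : ℝ)) := by
          rw [hr_def, hδ_def, ← Real.rpow_add hρ0]; ring_nf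
        have heq : (6 * r * δ) * (2 * π * kF * δ) = 12 * π * (kF * δ) * (r * δ) := by ring
        rw [heq, hkFδ, hrδ]
        have hX : (0:ℝ) ≤ ρ ^ ((-(1/2) + ε : ℝ)) := (Real.rpow_pos_of_pos hρ0 _).le
        have h2π4 : (1:ℝ) ≤ (2*π)^(4:ℕ) := one_le_pow₀ (by linarith)
        have hCv0 : (0:ℝ) ≤ 12 * π * Real.sqrt (4 * π) := by positivity
        have hh := mul_le_mul_of_nonneg_right h2π4
          (by linarith : (0:ℝ) ≤ 12 * π * Real.sqrt (4 * π) + 1)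
        have hfinal : 12 * π * Real.sqrt (4 * π)
            ≤ (2*π)^(4:ℕ) * (12 * π * Real.sqrt (4 * π) + 1) := by linarith
        exact mul_le_mul_of_nonneg_right hfinal hX
end

section
/- Let v : ℝ² → ℝ be smooth and compactly supported and define the recollision energy E_re(ρ) = (2π)^{−4} ∫_{{k : |k| ≤ k_F}} ∫_{{l : |l| ≥ k_F, |l| − |k| ≥ ρ^{−1/2}}} |F[v](k − l)|² / (|l|² − |k|²) dl dk, where k_F = √(4πρ). Then for every 0 < ε < 1/2 there exist constants C > 0, C_ε > 0 and ρ₀ > 0 such that E_re(ρ) ≤ C ρ^{2ε} + C_ε ρ^{−1/ε} for all ρ ≥ ρ₀. (This is the upper bound in estimate (2.40) of Lemma 2.2 for the next-to-leading-order mean-field energy correction.) -/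
open MeasureTheory Real

/-- The recollision energy
`E_re(ρ) = (2π)^{−4} ∫_{|k| ≤ k_F} ∫_{|l| ≥ k_F, |l|−|k| ≥ ρ^{−1/2}}
    |F[v](k−l)|² / (|l|² − |k|²) dl dk` with `k_F = √(4πρ)`. -/
noncomputable def Ere (v : EuclideanSpace ℝ (Fin 2) → ℝ) (ρ : ℝ) : ℝ :=
  ((2 * π) ^ (4:ℕ))⁻¹ *
    ∫ k in {k : EuclideanSpace ℝ (Fin 2) | ‖k‖ ≤ Real.sqrt (4 * π * ρ)},
      ∫ l in {l : EuclideanSpace ℝ (Fin 2) |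
          Real.sqrt (4 * π * ρ) ≤ ‖l‖ ∧ ρ ^ (-(1/2) : ℝ) ≤ ‖l‖ - ‖k‖},
        ‖fourierTransform2 v (k - l)‖ ^ 2 / (‖l‖ ^ 2 - ‖k‖ ^ 2)

private abbrev E2 := EuclideanSpace ℝ (Fin 2)

/-- A smooth compactly supported function is a Schwartz function. -/
private noncomputable def schwartzOfCompactSupport (f : E2 → ℂ) (hf : ContDiff ℝ (⊤ : ℕ∞) f)
    (hs : HasCompactSupport f) : SchwartzMap E2 ℂ where
  toFun := f
  smooth' := hf.of_le (by simp)
  decay' := by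
    intro k n
    have hsupp : HasCompactSupport fun x : E2 =>
        ‖x‖ ^ k * ‖iteratedFDeriv ℝ n f x‖ :=
      ((hs.iteratedFDeriv n).comp_left norm_zero).mul_left
    have hcont : Continuous fun x : E2 => ‖x‖ ^ k * ‖iteratedFDeriv ℝ n f x‖ :=
      (continuous_norm.pow k).mul (hf.continuous_iteratedFDeriv (by exact_mod_cast le_top)).norm
    obtain ⟨C, hC⟩ := hsupp.exists_bound_of_continuous hcont
    exact ⟨C, fun x => by simpa using hC x⟩

set_option maxHeartbeats 1000000 in
open FourierTransform in
private lemma integrable_normsq_ft (v : E2 → ℝ) (hv : ContDiff ℝ (⊤ : ℕ∞) v)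
    (hsupp : HasCompactSupport v) :
    Integrable (fun q : E2 => ‖fourierTransform2 v q‖ ^ 2) := by
  have h2π : (2 * π) ≠ 0 := by positivity
  set vc : E2 → ℂ := fun x => (v x : ℂ) with hvc
  have hvc_smooth : ContDiff ℝ (⊤ : ℕ∞) vc := Complex.ofRealCLM.contDiff.comp hv
  have hvc_supp : HasCompactSupport vc :=
    hsupp.comp_left (g := Complex.ofReal) Complex.ofReal_zero
  set V := schwartzOfCompactSupport vc hvc_smooth hvc_supp with hV
  set W := SchwartzMap.fourierTransformCLM ℂ V with hWdef
  have hW : ∀ ξ : E2, fourierTransform2 v ξ = W ((2 * π)⁻¹ • ξ) := by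
    intro ξ
    rw [hWdef, SchwartzMap.fourierTransformCLM_apply, SchwartzMap.fourier_coe, Real.fourier_eq']
    unfold fourierTransform2
    congr 1
    funext x
    have hVx : (V : E2 → ℂ) x = (v x : ℂ) := rfl
    rw [hVx, smul_eq_mul]
    congr 1
    rw [real_inner_smul_right, real_inner_comm ξ x]
    have hreal : -2 * π * ((2 * π)⁻¹ * (inner ℝ ξ x : ℝ)) = -(inner ℝ ξ x : ℝ) := by
      field_simp
    rw [hreal]
    push_cast
    ring
  obtain ⟨M, hM0, hM⟩ := W.decay 0 0
  have hM' : ∀ x, ‖W x‖ ≤ M := fun x => by simpa using hM x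
  have hu : Integrable (fun q : E2 => ‖W q‖ ^ 2) := by
    refine (W.integrable.norm.const_mul M).mono'
      ((W.continuous.norm.pow 2).aestronglyMeasurable)
      (Filter.Eventually.of_forall fun q => ?_)
    have h1 := hM' q
    have h2 := norm_nonneg (W q)
    have h3 : (0:ℝ) ≤ ‖W q‖ ^ 2 := by positivity
    rw [Real.norm_eq_abs, abs_of_nonneg h3]
    nlinarith
  have hcomp : Integrable (fun q : E2 => ‖W ((2 * π)⁻¹ • q)‖ ^ 2) :=
    hu.comp_smul (inv_ne_zero h2π)
  refine hcomp.congr (Filter.Eventually.of_forall fun q => ?_)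
  show ‖W ((2 * π)⁻¹ • q)‖ ^ 2 = ‖fourierTransform2 v q‖ ^ 2
  rw [hW q]

/-- elementary interpolation inequality -/
private lemma max_inv_le {δ d ε : ℝ} (hδ : 0 < δ) (hd : 0 < d) (hε0 : 0 < ε)
    (hε : ε < 1/2) : (max δ d)⁻¹ ≤ δ ^ (-(2*ε)) * d ^ (2*ε - 1) := by
  have hmax : 0 < max δ d := lt_max_of_lt_left hδ
  have hsum : (-(2*ε)) + (2*ε - 1) = -1 := by ring
  calc (max δ d)⁻¹ = (max δ d) ^ (-1 : ℝ) := (Real.rpow_neg_one _).symm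
    _ = (max δ d) ^ (-(2*ε)) * (max δ d) ^ (2*ε - 1) := by
        rw [← Real.rpow_add hmax, hsum]
    _ ≤ δ ^ (-(2*ε)) * d ^ (2*ε - 1) := by
        refine mul_le_mul
          (Real.rpow_le_rpow_of_nonpos hδ (le_max_left _ _) (by linarith))
          (Real.rpow_le_rpow_of_nonpos hd (le_max_right _ _) (by linarith))
          (Real.rpow_nonneg hmax.le _) (Real.rpow_pos_of_pos hδ _).le

/-- The key estimate on the double integral. -/
private lemma double_bound (g : E2 → ℝ) (hg0 : ∀ q, 0 ≤ g q) (hgInt : Integrable g)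
    {kF δ ε : ℝ} (hkF0 : 0 < kF) (hδ0 : 0 < δ) (hε0 : 0 < ε) (hε : ε < 1/2) :
    (∫ k in {k : E2 | ‖k‖ ≤ kF}, ∫ l in {l : E2 | kF ≤ ‖l‖ ∧ δ ≤ ‖l‖ - ‖k‖},
        g (k - l) / (‖l‖ ^ 2 - ‖k‖ ^ 2))
      ≤ 2 * (volume (Metric.ball (0:E2) 1)).toReal *
        ((∫ q, g q) * δ ^ (-(2*ε)) * (kF ^ (2*ε) / (2*ε))) := by
  set Ig := ∫ q, g q with hIgdef
  have hIg0 : 0 ≤ Ig := integral_nonneg hg0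
  set B := (volume (Metric.ball (0:E2) 1)).toReal with hB
  have hB0 : 0 ≤ B := ENNReal.toReal_nonneg
  set m : E2 → ℝ := fun k => max δ (kF - ‖k‖) with hm
  have hm0 : ∀ k : E2, 0 < m k := fun k => lt_max_of_lt_left hδ0
  set S : E2 → Set E2 := fun k => {l | kF ≤ ‖l‖ ∧ δ ≤ ‖l‖ - ‖k‖} with hSdef
  have hSmeas : ∀ k, MeasurableSet (S k) := fun k =>
    ((isClosed_le continuous_const continuous_norm).inter
      (isClosed_le continuous_const (continuous_norm.sub continuous_const))).measurableSet
  have hden : ∀ k : E2, ∀ l ∈ S k, kF * m k ≤ ‖l‖ ^ 2 - ‖k‖ ^ 2 := by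
    intro k l hl
    obtain ⟨h1, h2⟩ := hl
    have hk0 : (0:ℝ) ≤ ‖k‖ := norm_nonneg k
    have hmk : m k ≤ ‖l‖ - ‖k‖ := max_le h2 (by linarith)
    have key : kF * m k ≤ (‖l‖ + ‖k‖) * (‖l‖ - ‖k‖) :=
      mul_le_mul (by linarith) hmk (hm0 k).le (by linarith)
    nlinarith [key]
  -- inner estimate
  have claim1 : ∀ k : E2,
      (∫ l in S k, g (k - l) / (‖l‖ ^ 2 - ‖k‖ ^ 2)) ≤ Ig * (kF * m k)⁻¹ := by
    intro k
    have hkm : 0 < kF * m k := mul_pos hkF0 (hm0 k)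
    have htop : Integrable (fun l : E2 => (kF * m k)⁻¹ * g (k - l))
        (volume.restrict (S k)) := ((hgInt.comp_sub_left k).const_mul _).integrableOn
    have h1 : (∫ l in S k, g (k - l) / (‖l‖ ^ 2 - ‖k‖ ^ 2))
        ≤ ∫ l in S k, (kF * m k)⁻¹ * g (k - l) := by
      refine integral_mono_of_nonneg ?_ htop ?_
      · refine (ae_restrict_iff' (hSmeas k)).2 (Filter.Eventually.of_forall fun l hl =>
          div_nonneg (hg0 _) (le_trans hkm.le (hden k l hl)))
      · refine (ae_restrict_iff' (hSmeas k)).2 (Filter.Eventually.of_forall fun l hl => ?_)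
        show g (k - l) / (‖l‖ ^ 2 - ‖k‖ ^ 2) ≤ (kF * m k)⁻¹ * g (k - l)
        rw [inv_mul_eq_div]
        gcongr
        · exact hg0 _
        · exact hden k l hl
    have h2 : (∫ l in S k, (kF * m k)⁻¹ * g (k - l))
        = (kF * m k)⁻¹ * ∫ l in S k, g (k - l) := integral_const_mul _ _
    have h3 : (∫ l in S k, g (k - l)) ≤ Ig := by
      have h4 : (∫ l in S k, g (k - l)) ≤ ∫ l, g (k - l) :=
        setIntegral_le_integral (hgInt.comp_sub_left k)
          (Filter.Eventually.of_forall fun l => hg0 _)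
      have h5 : (∫ l : E2, g (k - l)) = Ig := integral_sub_left_eq_self g volume k
      linarith
    calc (∫ l in S k, g (k - l) / (‖l‖ ^ 2 - ‖k‖ ^ 2))
        ≤ (kF * m k)⁻¹ * ∫ l in S k, g (k - l) := by rw [← h2]; exact h1
      _ ≤ (kF * m k)⁻¹ * Ig := by
          exact mul_le_mul_of_nonneg_left h3 (inv_nonneg.2 hkm.le)
      _ = Ig * (kF * m k)⁻¹ := by ring
  -- outer estimate
  set K : Set E2 := {k | ‖k‖ ≤ kF} with hK
  have hKball : K = Metric.closedBall (0:E2) kF := by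
    ext k; simp [hK, Metric.mem_closedBall, dist_zero_right]
  have hKmeas : MeasurableSet K := by rw [hKball]; exact measurableSet_closedBall
  set Φ : E2 → ℝ := fun k => Ig * (kF * m k)⁻¹ with hΦ
  have hΦcont : Continuous Φ := by
    refine continuous_const.mul (Continuous.inv₀ ?_ fun k => (mul_pos hkF0 (hm0 k)).ne')
    exact continuous_const.mul (continuous_const.max (continuous_const.sub continuous_norm))
  have hΦint : IntegrableOn Φ K := by
    rw [hKball]
    exact hΦcont.continuousOn.integrableOn_compact (isCompact_closedBall _ _)
  have hOuter : (∫ k in K, ∫ l in S k, g (k - l) / (‖l‖ ^ 2 - ‖k‖ ^ 2))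
      ≤ ∫ k in K, Φ k := by
    refine integral_mono_of_nonneg (Filter.Eventually.of_forall fun k => ?_) hΦint
      (Filter.Eventually.of_forall fun k => claim1 k)
    exact setIntegral_nonneg (hSmeas k) fun l hl =>
      div_nonneg (hg0 _) (le_trans (mul_pos hkF0 (hm0 k)).le (hden k l hl))
  -- polar coordinates
  set F₁ : ℝ → ℝ := Set.indicator (Set.Iic kF)
    (fun r => Ig * (kF * max δ (kF - r))⁻¹) with hF₁
  have hindic : ∀ k : E2, K.indicator Φ k = F₁ ‖k‖ := by
    intro k
    by_cases h : ‖k‖ ≤ kF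
    · rw [Set.indicator_of_mem (show k ∈ K from h),
        hF₁, Set.indicator_of_mem (Set.mem_Iic.2 h)]
    · rw [Set.indicator_of_notMem (show k ∉ K from h),
        hF₁, Set.indicator_of_notMem (by simpa using h)]
  have hpolar : (∫ k in K, Φ k) = 2 * B * ∫ y in Set.Ioi (0:ℝ), y * F₁ y := by
    rw [← integral_indicator hKmeas]
    calc (∫ k : E2, K.indicator Φ k) = ∫ k : E2, F₁ ‖k‖ :=
          integral_congr_ae (Filter.Eventually.of_forall hindic)
      _ = 2 * B * ∫ y in Set.Ioi (0:ℝ), y * F₁ y := by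
          rw [MeasureTheory.integral_fun_norm_addHaar volume F₁]
          have hfr : Module.finrank ℝ E2 = 2 := finrank_euclideanSpace_fin
          have hsub : (2:ℕ) - 1 = 1 := rfl
          simp only [hfr, hsub, smul_eq_mul, nsmul_eq_mul, Nat.cast_ofNat, pow_one, ← hB]
          rw [measureReal_def, ← hB]
          ring
  -- 1D estimate
  set r : ℝ := 2 * ε - 1 with hr
  have hr1 : (-1 : ℝ) < r := by rw [hr]; linarith
  set c1 : ℝ := Ig * δ ^ (-(2*ε)) with hc1
  have hc10 : 0 ≤ c1 := mul_nonneg hIg0 (Real.rpow_nonneg hδ0.le _)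
  set T : ℝ → ℝ := Set.indicator (Set.Ioo 0 kF) (fun y => c1 * (kF - y) ^ r) with hT
  have hTint : Integrable T := by
    have h1 : IntervalIntegrable (fun y : ℝ => (kF - y) ^ r) volume 0 kF := by
      have h2 := (intervalIntegral.intervalIntegrable_rpow' (a := 0) (b := kF)
        hr1).comp_sub_left kF
      simpa using h2.symm
    have h4 : IntegrableOn (fun y : ℝ => (kF - y) ^ r) (Set.Ioo 0 kF) :=
      ((intervalIntegrable_iff_integrableOn_Ioc_of_le hkF0.le).1 h1).mono_set
        Set.Ioo_subset_Ioc_self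
    have h5 : IntegrableOn (fun y : ℝ => c1 * (kF - y) ^ r) (Set.Ioo 0 kF) :=
      h4.const_mul c1
    exact h5.integrable_indicator measurableSet_Ioo
  have h1D : (∫ y in Set.Ioi (0:ℝ), y * F₁ y) ≤ ∫ y in Set.Ioi (0:ℝ), T y := by
    refine integral_mono_of_nonneg ?_ hTint.integrableOn ?_
    · refine (ae_restrict_iff' measurableSet_Ioi).2 (Filter.Eventually.of_forall
        fun y hy => mul_nonneg (le_of_lt hy) ?_)
      refine Set.indicator_nonneg (fun t _ => mul_nonneg hIg0 (inv_nonneg.2 ?_)) _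
      exact mul_nonneg hkF0.le (le_trans hδ0.le (le_max_left _ _))
    · have hne0 : ∀ᵐ y : ℝ, y ≠ kF := by
        rw [ae_iff]
        simp only [ne_eq, not_not, Set.setOf_eq_eq_singleton]
        exact measure_singleton kF
      have hne : ∀ᵐ y ∂(volume.restrict (Set.Ioi (0:ℝ))), y ≠ kF := ae_restrict_of_ae hne0
      filter_upwards [hne, ae_restrict_mem measurableSet_Ioi] with y hyne hy
      by_cases hyk : y < kF
      · have hy0 : (0:ℝ) < y := hy
        have hmem : y ∈ Set.Ioo (0:ℝ) kF := ⟨hy0, hyk⟩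
        rw [hT, Set.indicator_of_mem hmem, hF₁, Set.indicator_of_mem (Set.mem_Iic.2 hyk.le)]
        have hd : 0 < kF - y := by linarith
        have key := max_inv_le hδ0 hd hε0 hε
        have hmaxpos : (0:ℝ) < max δ (kF - y) := lt_max_of_lt_left hδ0
        have h5 : y * (kF * max δ (kF - y))⁻¹ ≤ (max δ (kF - y))⁻¹ := by
          rw [mul_inv]
          have heq : y * (kF⁻¹ * (max δ (kF - y))⁻¹) = (y / kF) * (max δ (kF - y))⁻¹ := by
            ring
          rw [heq]
          have h6 : y / kF ≤ 1 := (div_le_one hkF0).2 hyk.le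
          exact mul_le_of_le_one_left (inv_nonneg.2 hmaxpos.le) h6 |>.trans_eq
            (one_mul _).symm |>.trans (le_of_eq (one_mul _))
        calc y * (Ig * (kF * max δ (kF - y))⁻¹)
            = Ig * (y * (kF * max δ (kF - y))⁻¹) := by ring
          _ ≤ Ig * (max δ (kF - y))⁻¹ := mul_le_mul_of_nonneg_left h5 hIg0
          _ ≤ Ig * (δ ^ (-(2*ε)) * (kF - y) ^ r) := mul_le_mul_of_nonneg_left key hIg0
          _ = c1 * (kF - y) ^ r := by rw [hc1]; ring
      · have hygt : kF < y := lt_of_le_of_ne (not_lt.1 hyk) (Ne.symm hyne)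
        rw [hT, Set.indicator_of_notMem (by simp [Set.mem_Ioo]; intro _; linarith),
          hF₁, Set.indicator_of_notMem (by simp [Set.mem_Iic]; linarith)]
        simp
  have hTval : (∫ y in Set.Ioi (0:ℝ), T y) = c1 * (kF ^ (2*ε) / (2*ε)) := by
    rw [hT, setIntegral_indicator measurableSet_Ioo,
      Set.inter_eq_self_of_subset_right Set.Ioo_subset_Ioi_self,
      integral_const_mul]
    congr 1
    rw [← integral_Ioc_eq_integral_Ioo, ← intervalIntegral.integral_of_le hkF0.le,
      intervalIntegral.integral_comp_sub_left (fun x : ℝ => x ^ r) kF]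
    simp only [sub_self, sub_zero]
    rw [integral_rpow (Or.inl hr1)]
    have hr2 : r + 1 = 2 * ε := by rw [hr]; ring
    rw [hr2, Real.zero_rpow (by positivity), sub_zero]
  calc (∫ k in {k : E2 | ‖k‖ ≤ kF}, ∫ l in {l : E2 | kF ≤ ‖l‖ ∧ δ ≤ ‖l‖ - ‖k‖},
        g (k - l) / (‖l‖ ^ 2 - ‖k‖ ^ 2))
      ≤ ∫ k in K, Φ k := hOuter
    _ = 2 * B * ∫ y in Set.Ioi (0:ℝ), y * F₁ y := hpolar
    _ ≤ 2 * B * ∫ y in Set.Ioi (0:ℝ), T y := by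
        exact mul_le_mul_of_nonneg_left h1D (by positivity)
    _ = 2 * B * (Ig * δ ^ (-(2*ε)) * (kF ^ (2*ε) / (2*ε))) := by
        rw [hTval, hc1]

/-- Upper bound in estimate (2.40) of Lemma 2.2: for every `0 < ε < 1/2`,
`E_re(ρ) ≤ C ρ^{2ε} + C_ε ρ^{−1/ε}` for all large enough `ρ`. -/
theorem recollision_energy_upper_bound
    (v : EuclideanSpace ℝ (Fin 2) → ℝ) (hv : ContDiff ℝ (⊤ : ℕ∞) v)
    (hsupp : HasCompactSupport v)
    (ε : ℝ) (hε0 : 0 < ε) (hε : ε < 1/2) :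
    ∃ C : ℝ, 0 < C ∧ ∃ Cε : ℝ, 0 < Cε ∧ ∃ ρ₀ : ℝ, 0 < ρ₀ ∧ ∀ ρ : ℝ, ρ₀ ≤ ρ →
      Ere v ρ ≤ C * ρ ^ (2 * ε) + Cε * ρ ^ (-(1/ε)) := by
  set g : E2 → ℝ := fun q => ‖fourierTransform2 v q‖ ^ 2 with hgdef
  have hg0 : ∀ q, 0 ≤ g q := fun q => by positivity
  have hgInt : Integrable g := integrable_normsq_ft v hv hsupp
  set Ig := ∫ q, g q with hIgdef
  have hIg0 : 0 ≤ Ig := integral_nonneg hg0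
  set B := (volume (Metric.ball (0:E2) 1)).toReal with hB
  have hB0 : 0 ≤ B := ENNReal.toReal_nonneg
  refine ⟨((2 * π) ^ (4:ℕ))⁻¹ * (2 * B * ((Ig + 1) * ((4*π) ^ ε / (2*ε)))) + 1,
    by positivity, 1, one_pos, 1, one_pos, fun ρ hρ => ?_⟩
  have hρ0 : (0:ℝ) < ρ := lt_of_lt_of_le one_pos hρ
  have hkF0 : (0:ℝ) < Real.sqrt (4 * π * ρ) := Real.sqrt_pos.2 (by positivity)
  have hδ0 : (0:ℝ) < ρ ^ (-(1/2) : ℝ) := Real.rpow_pos_of_pos hρ0 _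
  have hbd := double_bound g hg0 hgInt hkF0 hδ0 hε0 hε
  -- rpow algebra
  have hpow1 : (ρ ^ (-(1/2) : ℝ)) ^ (-(2*ε)) = ρ ^ ε := by
    rw [← Real.rpow_mul hρ0.le]
    congr 1
    ring
  have hpow2 : (Real.sqrt (4 * π * ρ)) ^ (2*ε) = (4*π) ^ ε * ρ ^ ε := by
    rw [Real.sqrt_eq_rpow, ← Real.rpow_mul (by positivity)]
    have h12 : (1/2 : ℝ) * (2*ε) = ε := by ring
    rw [h12, Real.mul_rpow (by positivity) hρ0.le]
  have hpow3 : ρ ^ ε * ρ ^ ε = ρ ^ (2*ε) := by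
    rw [← Real.rpow_add hρ0]
    congr 1
    ring
  have heq : Ig * (ρ ^ (-(1/2) : ℝ)) ^ (-(2*ε)) * ((Real.sqrt (4 * π * ρ)) ^ (2*ε) / (2*ε))
      = Ig * ((4*π) ^ ε / (2*ε)) * ρ ^ (2*ε) := by
    rw [hpow1, hpow2]
    rw [show Ig * ρ ^ ε * ((4*π) ^ ε * ρ ^ ε / (2*ε))
        = Ig * ((4*π) ^ ε / (2*ε)) * (ρ ^ ε * ρ ^ ε) from by ring, hpow3]
  have hEre : Ere v ρ ≤ ((2 * π) ^ (4:ℕ))⁻¹ *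
      (2 * B * (Ig * ((4*π) ^ ε / (2*ε)) * ρ ^ (2*ε))) := by
    unfold Ere
    refine le_trans (mul_le_mul_of_nonneg_left hbd (by positivity)) ?_
    rw [heq]
  have hfin : ((2 * π) ^ (4:ℕ))⁻¹ * (2 * B * (Ig * ((4*π) ^ ε / (2*ε)) * ρ ^ (2*ε)))
      ≤ (((2 * π) ^ (4:ℕ))⁻¹ * (2 * B * ((Ig + 1) * ((4*π) ^ ε / (2*ε)))) + 1) * ρ ^ (2 * ε)
        + 1 * ρ ^ (-(1/ε)) := by
    have hx : (0:ℝ) ≤ ρ ^ (2*ε) := (Real.rpow_pos_of_pos hρ0 _).le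
    have hy : (0:ℝ) < ρ ^ (-(1/ε)) := Real.rpow_pos_of_pos hρ0 _
    have hq : (0:ℝ) ≤ (4*π) ^ ε / (2*ε) := by positivity
    have hc4 : (0:ℝ) ≤ ((2 * π) ^ (4:ℕ))⁻¹ := by positivity
    have hstep : ((2 * π) ^ (4:ℕ))⁻¹ * (2 * B * (Ig * ((4*π) ^ ε / (2*ε)) * ρ ^ (2*ε)))
        = (((2 * π) ^ (4:ℕ))⁻¹ * (2 * B * (Ig * ((4*π) ^ ε / (2*ε))))) * ρ ^ (2*ε) := by
      ring
    rw [hstep]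
    have hmono : (((2 * π) ^ (4:ℕ))⁻¹ * (2 * B * (Ig * ((4*π) ^ ε / (2*ε))))) * ρ ^ (2*ε)
        ≤ (((2 * π) ^ (4:ℕ))⁻¹ * (2 * B * ((Ig + 1) * ((4*π) ^ ε / (2*ε))))) * ρ ^ (2*ε) := by
      have h1 : Ig * ((4*π) ^ ε / (2*ε)) ≤ (Ig + 1) * ((4*π) ^ ε / (2*ε)) := by nlinarith
      have h2 : (0:ℝ) ≤ 2 * B := by positivity
      nlinarith [mul_le_mul_of_nonneg_left h1 h2,
        mul_le_mul_of_nonneg_left (mul_le_mul_of_nonneg_left h1 h2) hc4,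
        mul_le_mul_of_nonneg_right
          (mul_le_mul_of_nonneg_left (mul_le_mul_of_nonneg_left h1 h2) hc4) hx]
    nlinarith [hmono, hy, hx]
  calc Ere v ρ ≤ _ := hEre
    _ ≤ _ := hfin
end

section
/- Let v : ℝ² → ℝ be smooth and compactly supported, let 0 < ε < 1/2, and let k_F = √(4πρ). Define E_re(ρ) as the double integral (2π)^{−4} ∫∫ of |F[v](k − l)|²/(|l|² − |k|²) over {|k| ≤ k_F, |l| ≥ k_F, |l| − |k| ≥ ρ^{−1/2}}, and E_re^{s,ε}(ρ) as the same integral further restricted to momentum transfer |k − l| < ρ^ε. Then there exists C_ε > 0 such that for all ρ ≥ 1, 0 ≤ E_re(ρ) − E_re^{s,ε}(ρ) ≤ C_ε ρ^{−1/ε}. (This is the estimate proved in (2.85)–(2.87) of the paper, showing that the recollision energy is exhausted, up to an error O(ρ^{−1/ε}), by transitions with momentum transfer below ρ^ε.) -/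
open MeasureTheory Real

open scoped FourierTransform

local notation "E2" => EuclideanSpace ℝ (Fin 2)

/-- A smooth compactly supported function is a Schwartz map. -/
noncomputable def mySchwartz (f : E2 → ℂ) (hf : ContDiff ℝ (⊤ : ℕ∞) f)
    (h : HasCompactSupport f) : SchwartzMap (EuclideanSpace ℝ (Fin 2)) ℂ where
  toFun := f
  smooth' := hf.of_le (by simp)
  decay' := by
    intro k n
    have h1 : Continuous fun x : E2 => ‖x‖ ^ k * ‖iteratedFDeriv ℝ n f x‖ :=
      (continuous_norm.pow k).mul (hf.continuous_iteratedFDeriv (by exact_mod_cast le_top)).norm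
    have h2 : HasCompactSupport fun x : E2 => ‖x‖ ^ k * ‖iteratedFDeriv ℝ n f x‖ := by
      have := (h.iteratedFDeriv (𝕜 := ℝ) n).norm
      exact this.mul_left
    obtain ⟨C, hC⟩ := h1.bounded_above_of_compact_support h2
    exact ⟨C, fun x => by
      have := hC x
      have h3 : 0 ≤ ‖x‖ ^ k * ‖iteratedFDeriv ℝ n f x‖ := by positivity
      rwa [Real.norm_of_nonneg h3] at this⟩

lemma ft2_eq (v : E2 → ℝ) (ξ : E2) :
    fourierTransform2 v ξ = 𝓕 (fun x : E2 => (v x : ℂ)) ((2 * π)⁻¹ • ξ) := by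
  rw [Real.fourier_eq']
  unfold fourierTransform2
  congr 1 with x
  rw [smul_eq_mul]
  congr 1
  have h1 : (inner ℝ x ((2 * π)⁻¹ • ξ) : ℝ) = (2 * π)⁻¹ * (inner ℝ x ξ : ℝ) :=
    real_inner_smul_right x ξ _
  rw [h1, real_inner_comm]
  generalize (inner ℝ x ξ : ℝ) = r
  have hπ : (2 * π) ≠ 0 := by positivity
  have h2 : -2 * π * ((2 * π)⁻¹ * r) = -r := by field_simp
  rw [h2]
  push_cast
  ring

lemma ft2_bound (v : E2 → ℝ) (hv : ContDiff ℝ (⊤ : ℕ∞) v) (hsupp : HasCompactSupport v) (M : ℕ) :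
    ∃ C : ℝ, 0 < C ∧ Continuous (fourierTransform2 v) ∧
      ∀ ξ : E2, ‖fourierTransform2 v ξ‖ ^ 2 ≤ C * (1 + ‖ξ‖) ^ (-(2 * M : ℝ)) := by
  have hV : ContDiff ℝ (⊤ : ℕ∞) (fun x : E2 => (v x : ℂ)) :=
    Complex.ofRealCLM.contDiff.comp hv
  have hVs : HasCompactSupport (fun x : E2 => (v x : ℂ)) :=
    hsupp.comp_left (g := fun t : ℝ => (t : ℂ)) (by simp)
  set Φ : SchwartzMap (EuclideanSpace ℝ (Fin 2)) ℂ :=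
    SchwartzMap.fourierTransformCLM ℝ (mySchwartz _ hV hVs) with hΦdef
  have heq : ∀ ξ : E2, fourierTransform2 v ξ = Φ ((2 * π)⁻¹ • ξ) := by
    intro ξ
    rw [ft2_eq]
    rfl
  have hcont : Continuous (fourierTransform2 v) := by
    have : fourierTransform2 v = fun ξ => Φ ((2 * π)⁻¹ • ξ) := funext heq
    rw [this]
    exact Φ.continuous.comp (continuous_const_smul _)
  set C0 : ℝ := 2 ^ M *
    (Finset.Iic ((M : ℕ), (0 : ℕ))).sup (fun m => SchwartzMap.seminorm ℝ m.1 m.2) Φ with hC0def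
  have hΦb : ∀ w : E2, (1 + ‖w‖) ^ M * ‖Φ w‖ ≤ C0 := by
    intro w
    have := SchwartzMap.one_add_le_sup_seminorm_apply (𝕜 := ℝ) (m := (M, 0))
      le_rfl le_rfl Φ w
    rwa [norm_iteratedFDeriv_zero] at this
  have hC0 : 0 ≤ C0 := le_trans (by positivity) (hΦb 0)
  set C1 : ℝ := (2 * π) ^ M * C0 with hC1def
  have hC1 : 0 ≤ C1 := by positivity
  refine ⟨C1 ^ 2 + 1, by positivity, hcont, fun ξ => ?_⟩
  set w : E2 := (2 * π)⁻¹ • ξ with hwdef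
  have hwn : ‖w‖ = (2 * π)⁻¹ * ‖ξ‖ := by
    rw [hwdef, norm_smul, Real.norm_eq_abs, abs_of_pos (by positivity)]
  have hle : (1 + ‖ξ‖) ≤ (2 * π) * (1 + ‖w‖) := by
    rw [hwn]
    have h2π : (1 : ℝ) ≤ 2 * π := by nlinarith [Real.pi_gt_three]
    have : (2 * π) * ((2 * π)⁻¹ * ‖ξ‖) = ‖ξ‖ := by
      field_simp
    nlinarith [norm_nonneg ξ]
  have hpow : (1 + ‖ξ‖) ^ M ≤ (2 * π) ^ M * (1 + ‖w‖) ^ M := by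
    rw [← mul_pow]
    exact pow_le_pow_left₀ (by positivity) hle M
  have hkey : (1 + ‖ξ‖) ^ M * ‖fourierTransform2 v ξ‖ ≤ C1 := by
    rw [heq ξ, ← hwdef]
    calc (1 + ‖ξ‖) ^ M * ‖Φ w‖ ≤ ((2 * π) ^ M * (1 + ‖w‖) ^ M) * ‖Φ w‖ :=
          mul_le_mul_of_nonneg_right hpow (norm_nonneg _)
      _ = (2 * π) ^ M * ((1 + ‖w‖) ^ M * ‖Φ w‖) := by ring
      _ ≤ (2 * π) ^ M * C0 := by
          exact mul_le_mul_of_nonneg_left (hΦb w) (by positivity)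
  have ha : (0:ℝ) < 1 + ‖ξ‖ := by positivity
  have hfle : ‖fourierTransform2 v ξ‖ ≤ C1 * ((1 + ‖ξ‖) ^ M)⁻¹ := by
    rw [le_mul_inv_iff₀ (by positivity), mul_comm]
    exact hkey
  have hsq : ‖fourierTransform2 v ξ‖ ^ 2 ≤ (C1 * ((1 + ‖ξ‖) ^ M)⁻¹) ^ 2 :=
    pow_le_pow_left₀ (norm_nonneg _) hfle 2
  have hrw : (C1 * ((1 + ‖ξ‖) ^ M)⁻¹) ^ 2 = C1 ^ 2 * (1 + ‖ξ‖) ^ (-(2 * M : ℝ)) := by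
    have : ((1 + ‖ξ‖) : ℝ) ^ (-(2 * M : ℝ)) = (((1 + ‖ξ‖) ^ M) ^ 2)⁻¹ := by
      rw [← pow_mul, ← Real.rpow_natCast (1 + ‖ξ‖) (M * 2), ← Real.rpow_neg ha.le]
      norm_num
      ring_nf
    rw [this]
    ring
  refine le_trans hsq (le_trans (le_of_eq hrw) ?_)
  have : (0:ℝ) ≤ (1 + ‖ξ‖) ^ (-(2 * M : ℝ)) := Real.rpow_nonneg ha.le _
  nlinarith


/-- The small-momentum-transfer part `E_re^{s,ε}(ρ)`: the same integral as `Ere` restricted in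
addition to momentum transfer `|k − l| < ρ^ε`. -/
noncomputable def EreS (v : EuclideanSpace ℝ (Fin 2) → ℝ) (ε ρ : ℝ) : ℝ :=
  ((2 * π) ^ (4:ℕ))⁻¹ *
    ∫ k in {k : EuclideanSpace ℝ (Fin 2) | ‖k‖ ≤ Real.sqrt (4 * π * ρ)},
      ∫ l in {l : EuclideanSpace ℝ (Fin 2) |
          Real.sqrt (4 * π * ρ) ≤ ‖l‖ ∧ ρ ^ (-(1/2) : ℝ) ≤ ‖l‖ - ‖k‖ ∧
          ‖k - l‖ < ρ ^ ε},
        ‖fourierTransform2 v (k - l)‖ ^ 2 / (‖l‖ ^ 2 - ‖k‖ ^ 2)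

set_option maxHeartbeats 2000000 in
/-- Estimate (2.85)–(2.87): the recollision energy is exhausted, up to an error `O(ρ^{−1/ε})`,
by transitions with momentum transfer below `ρ^ε`:
`0 ≤ E_re(ρ) − E_re^{s,ε}(ρ) ≤ C_ε ρ^{−1/ε}` for all `ρ ≥ 1`. -/
theorem recollision_energy_small_transfer
    (v : EuclideanSpace ℝ (Fin 2) → ℝ) (hv : ContDiff ℝ (⊤ : ℕ∞) v)
    (hsupp : HasCompactSupport v)
    (ε : ℝ) (hε0 : 0 < ε) (hε : ε < 1/2) :
    ∃ Cε : ℝ, 0 < Cε ∧ ∀ ρ : ℝ, 1 ≤ ρ →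
      0 ≤ Ere v ρ - EreS v ε ρ ∧ Ere v ρ - EreS v ε ρ ≤ Cε * ρ ^ (-(1/ε)) := by
  have hεne : ε ≠ 0 := ne_of_gt hε0
  set t : ℝ := (1 + 1/ε) / ε with htdef
  have ht0 : 0 < t := by positivity
  set M : ℕ := ⌈t⌉₊ + 2 with hMdef
  have hMt : t + 4 ≤ 2 * (M:ℝ) := by
    have h := Nat.le_ceil t
    have h2 : ((⌈t⌉₊ : ℝ) + 2) = (M:ℝ) := by rw [hMdef]; push_cast; ring
    nlinarith
  set s : ℝ := 2 * M - t with hsdef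
  have hs2 : (2:ℝ) < s := by rw [hsdef]; linarith
  have hts : -(2 * M : ℝ) = -t + -s := by rw [hsdef]; ring
  obtain ⟨C, hC, hcont, hdecay⟩ := ft2_bound v hv hsupp M
  have hJ2_int : Integrable (fun x : E2 => (1 + ‖x‖) ^ (-(2 * M : ℝ))) :=
    integrable_one_add_norm (by rw [finrank_euclideanSpace_fin]; norm_num; linarith)
  have hJs_int : Integrable (fun x : E2 => (1 + ‖x‖) ^ (-s)) :=
    integrable_one_add_norm (by rw [finrank_euclideanSpace_fin]; norm_num; linarith)
  set J2 : ℝ := ∫ x : E2, (1 + ‖x‖) ^ (-(2 * M : ℝ)) with hJ2def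
  set Js : ℝ := ∫ x : E2, (1 + ‖x‖) ^ (-s) with hJsdef
  have hJ2nn : 0 ≤ J2 := integral_nonneg fun x => Real.rpow_nonneg (by positivity) _
  have hJsnn : 0 ≤ Js := integral_nonneg fun x => Real.rpow_nonneg (by positivity) _
  set c₀ : ℝ := (volume (Metric.closedBall (0:E2) 1)).toReal with hc0def
  have hc0nn : 0 ≤ c₀ := ENNReal.toReal_nonneg
  set K0 : ℝ := ((2 * π) ^ (4:ℕ))⁻¹ *
    ((Real.sqrt (4 * π))⁻¹ * C * Js * (4 * π * c₀)) with hK0def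
  have hK0nn : 0 ≤ K0 := by
    apply mul_nonneg (by positivity)
    apply mul_nonneg (mul_nonneg (mul_nonneg (by positivity) hC.le) hJsnn) (by positivity)
  refine ⟨K0 + 1, by positivity, fun ρ hρ => ?_⟩
  have hρ0 : (0:ℝ) < ρ := by linarith
  set kF : ℝ := Real.sqrt (4 * π * ρ) with hkFdef
  set δ : ℝ := ρ ^ (-(1/2) : ℝ) with hδdef
  set R : ℝ := ρ ^ ε with hRdef
  have hkF0 : 0 < kF := Real.sqrt_pos.2 (by positivity)
  have hδ0 : 0 < δ := Real.rpow_pos_of_pos hρ0 _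
  have hR1 : 1 ≤ R := Real.one_le_rpow hρ hε0.le
  have hs4π : 0 < Real.sqrt (4 * π) := Real.sqrt_pos.2 (by positivity)
  have hkFδ : Real.sqrt (4 * π) ≤ kF * δ := by
    have h1 : kF = Real.sqrt (4 * π) * Real.sqrt ρ := by
      rw [hkFdef, Real.sqrt_mul (by positivity)]
    have h2 : δ = (Real.sqrt ρ)⁻¹ := by
      rw [hδdef, Real.rpow_neg hρ0.le, ← Real.sqrt_eq_rpow]
    have h3 : Real.sqrt ρ ≠ 0 := ne_of_gt (Real.sqrt_pos.2 hρ0)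
    rw [h1, h2, mul_assoc, mul_inv_cancel₀ h3, mul_one]
  set f : E2 → E2 → ℝ :=
    fun k l => ‖fourierTransform2 v (k - l)‖ ^ 2 / (‖l‖ ^ 2 - ‖k‖ ^ 2) with hfdef
  set K : Set E2 := {k : E2 | ‖k‖ ≤ kF} with hKdef
  set bigS : E2 → Set E2 := fun k => {l : E2 | kF ≤ ‖l‖ ∧ δ ≤ ‖l‖ - ‖k‖} with hbigdef
  set smallS : E2 → Set E2 :=
    fun k => {l : E2 | kF ≤ ‖l‖ ∧ δ ≤ ‖l‖ - ‖k‖ ∧ ‖k - l‖ < R} with hsmalldef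
  have hKmeas : MeasurableSet K := measurableSet_le measurable_norm measurable_const
  have hbigmeas : ∀ k, MeasurableSet (bigS k) := fun k =>
    (measurableSet_le measurable_const measurable_norm).inter
      (measurableSet_le measurable_const (measurable_norm.sub measurable_const))
  have hsmallmeas : ∀ k, MeasurableSet (smallS k) := fun k =>
    (measurableSet_le measurable_const measurable_norm).inter
      ((measurableSet_le measurable_const (measurable_norm.sub measurable_const)).inter
        (measurableSet_lt ((measurable_const.sub measurable_id).norm) measurable_const))
  have hgcont : Continuous fun ξ : E2 => ‖fourierTransform2 v ξ‖ ^ 2 := hcont.norm.pow 2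
  have hfmeas : ∀ k, Measurable (f k) := fun k =>
    ((hgcont.comp (continuous_const.sub continuous_id)).measurable).div
      (((continuous_norm.pow 2).sub continuous_const).measurable)
  have hden : ∀ k, ‖k‖ ≤ kF → ∀ l ∈ bigS k, Real.sqrt (4 * π) ≤ ‖l‖ ^ 2 - ‖k‖ ^ 2 := by
    intro k hk l hl
    obtain ⟨h1, h2⟩ := hl
    have hA : kF * δ ≤ (‖l‖ + ‖k‖) * (‖l‖ - ‖k‖) := by
      apply mul_le_mul (by linarith [norm_nonneg k]) h2 hδ0.le
        (by positivity)
    have hexp : (‖l‖ + ‖k‖) * (‖l‖ - ‖k‖) = ‖l‖ ^ 2 - ‖k‖ ^ 2 := by ring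
    linarith
  have hfnn : ∀ k, ‖k‖ ≤ kF → ∀ l ∈ bigS k, 0 ≤ f k l := fun k hk l hl =>
    div_nonneg (by positivity) (le_trans hs4π.le (hden k hk l hl))
  have hfb : ∀ k, ‖k‖ ≤ kF → ∀ l ∈ bigS k,
      f k l ≤ (Real.sqrt (4 * π))⁻¹ * (C * (1 + ‖k - l‖) ^ (-(2 * M : ℝ))) := by
    intro k hk l hl
    have h1 : f k l ≤ ‖fourierTransform2 v (k - l)‖ ^ 2 / Real.sqrt (4 * π) :=
      div_le_div_of_nonneg_left (by positivity) hs4π (hden k hk l hl)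
    refine le_trans h1 ?_
    rw [div_eq_inv_mul]
    exact mul_le_mul_of_nonneg_left (hdecay (k - l)) (by positivity)
  have hbd_int : ∀ k : E2, Integrable
      (fun l : E2 => (Real.sqrt (4 * π))⁻¹ * (C * (1 + ‖k - l‖) ^ (-(2 * M : ℝ)))) :=
    fun k => (((hJ2_int.comp_sub_left k).const_mul _).const_mul _)
  have hint_big : ∀ k, ‖k‖ ≤ kF → IntegrableOn (f k) (bigS k) := by
    intro k hk
    apply Integrable.mono' ((hbd_int k).restrict (s := bigS k))
      ((hfmeas k).aestronglyMeasurable)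
    rw [ae_restrict_iff' (hbigmeas k)]
    exact ae_of_all _ fun l hl => by
      rw [Real.norm_of_nonneg (hfnn k hk l hl)]
      exact hfb k hk l hl
  have hint_small : ∀ k, ‖k‖ ≤ kF → IntegrableOn (f k) (smallS k) := fun k hk =>
    (hint_big k hk).mono_set (fun l hl => ⟨hl.1, hl.2.1⟩)
  set IB : E2 → ℝ := fun k => ∫ l in bigS k, f k l with hIBdef
  set IS : E2 → ℝ := fun k => ∫ l in smallS k, f k l with hISdef
  have hbd_integral : ∀ k : E2,
      (∫ l : E2, (Real.sqrt (4 * π))⁻¹ * (C * (1 + ‖k - l‖) ^ (-(2 * M : ℝ))))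
        = (Real.sqrt (4 * π))⁻¹ * (C * J2) := by
    intro k
    rw [integral_const_mul, integral_const_mul]
    have h := integral_sub_left_eq_self
      (fun x : E2 => (1 + ‖x‖) ^ (-(2 * M : ℝ))) volume k
    rw [h, hJ2def]
  have hIB_le : ∀ k, ‖k‖ ≤ kF → IB k ≤ (Real.sqrt (4 * π))⁻¹ * (C * J2) := by
    intro k hk
    calc IB k ≤ ∫ l in bigS k,
          (Real.sqrt (4 * π))⁻¹ * (C * (1 + ‖k - l‖) ^ (-(2 * M : ℝ))) :=
        setIntegral_mono_on (hint_big k hk) ((hbd_int k).integrableOn) (hbigmeas k)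
          (hfb k hk)
      _ ≤ ∫ l : E2, (Real.sqrt (4 * π))⁻¹ * (C * (1 + ‖k - l‖) ^ (-(2 * M : ℝ))) :=
        setIntegral_le_integral (hbd_int k) (ae_of_all _ fun l => by
          have : (0:ℝ) ≤ (1 + ‖k - l‖) ^ (-(2 * M : ℝ)) :=
            Real.rpow_nonneg (by positivity) _
          have h4 : (0:ℝ) ≤ (Real.sqrt (4 * π))⁻¹ := by positivity
          exact mul_nonneg h4 (mul_nonneg hC.le this))
      _ = _ := hbd_integral k
  have hIB_nn : ∀ k, ‖k‖ ≤ kF → 0 ≤ IB k := fun k hk =>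
    setIntegral_nonneg (hbigmeas k) (hfnn k hk)
  have hIS_nn : ∀ k, ‖k‖ ≤ kF → 0 ≤ IS k := fun k hk =>
    setIntegral_nonneg (hsmallmeas k) (fun l hl => hfnn k hk l ⟨hl.1, hl.2.1⟩)
  have hdiff : ∀ k, ‖k‖ ≤ kF → IS k ≤ IB k ∧
      IB k - IS k ≤ (Real.sqrt (4 * π))⁻¹ * C * R ^ (-t) * Js := by
    intro k hk
    have hsub : smallS k ⊆ bigS k := fun l hl => ⟨hl.1, hl.2.1⟩
    have hdiffeq : ∫ l in bigS k \ smallS k, f k l = IB k - IS k :=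
      integral_diff (hsmallmeas k) (hint_big k hk) hsub
    have hdnn : 0 ≤ ∫ l in bigS k \ smallS k, f k l :=
      setIntegral_nonneg ((hbigmeas k).diff (hsmallmeas k))
        (fun l hl => hfnn k hk l hl.1)
    constructor
    · linarith [hdiffeq ▸ hdnn]
    · rw [← hdiffeq]
      have hpt : ∀ l ∈ bigS k \ smallS k,
          f k l ≤ (Real.sqrt (4 * π))⁻¹ * (C * (R ^ (-t) * (1 + ‖k - l‖) ^ (-s))) := by
        intro l hl
        obtain ⟨hlb, hls⟩ := hl
        have hRle : R ≤ ‖k - l‖ := by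
          by_contra hcon
          exact hls ⟨hlb.1, hlb.2, lt_of_not_ge hcon⟩
        have hsplit : ((1:ℝ) + ‖k - l‖) ^ (-(2 * M : ℝ))
            = (1 + ‖k - l‖) ^ (-t) * (1 + ‖k - l‖) ^ (-s) := by
          rw [hts, Real.rpow_add (by positivity)]
        have hmono : ((1:ℝ) + ‖k - l‖) ^ (-t) ≤ R ^ (-t) :=
          Real.rpow_le_rpow_of_nonpos (by linarith)
            (by linarith [norm_nonneg (k - l)]) (by linarith)
        refine le_trans (hfb k hk l hlb) ?_
        rw [hsplit]
        have h5 : (1 + ‖k - l‖) ^ (-t) * (1 + ‖k - l‖) ^ (-s)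
            ≤ R ^ (-t) * (1 + ‖k - l‖) ^ (-s) :=
          mul_le_mul_of_nonneg_right hmono (Real.rpow_nonneg (by positivity) _)
        exact mul_le_mul_of_nonneg_left
          (mul_le_mul_of_nonneg_left h5 hC.le) (by positivity)
      have hbd2_int : Integrable (fun l : E2 =>
          (Real.sqrt (4 * π))⁻¹ * (C * (R ^ (-t) * (1 + ‖k - l‖) ^ (-s)))) :=
        (((hJs_int.comp_sub_left k).const_mul _).const_mul _).const_mul _
      calc ∫ l in bigS k \ smallS k, f k l
          ≤ ∫ l in bigS k \ smallS k,
              (Real.sqrt (4 * π))⁻¹ * (C * (R ^ (-t) * (1 + ‖k - l‖) ^ (-s))) :=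
            setIntegral_mono_on ((hint_big k hk).mono_set Set.diff_subset)
              hbd2_int.integrableOn ((hbigmeas k).diff (hsmallmeas k)) hpt
        _ ≤ ∫ l : E2,
              (Real.sqrt (4 * π))⁻¹ * (C * (R ^ (-t) * (1 + ‖k - l‖) ^ (-s))) :=
            setIntegral_le_integral hbd2_int (ae_of_all _ fun l => by
              have h1 : (0:ℝ) ≤ (1 + ‖k - l‖) ^ (-s) :=
                Real.rpow_nonneg (by positivity) _
              have h2 : (0:ℝ) ≤ R ^ (-t) := Real.rpow_nonneg (by linarith) _
              have h4 : (0:ℝ) ≤ (Real.sqrt (4 * π))⁻¹ := by positivity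
              exact mul_nonneg h4 (mul_nonneg hC.le (mul_nonneg h2 h1)))
        _ = (Real.sqrt (4 * π))⁻¹ * C * R ^ (-t) * Js := by
            rw [integral_const_mul, integral_const_mul, integral_const_mul]
            have h := integral_sub_left_eq_self
              (fun x : E2 => (1 + ‖x‖) ^ (-s)) volume k
            rw [h, hJsdef]
            ring
  -- outer measurability
  have hFmeas : Measurable fun p : E2 × E2 => f p.1 p.2 :=
    ((hgcont.comp (continuous_fst.sub continuous_snd)).measurable).div
      (((continuous_snd.norm.pow 2).sub (continuous_fst.norm.pow 2)).measurable)
  have hprod_big : MeasurableSet {p : E2 × E2 | kF ≤ ‖p.2‖ ∧ δ ≤ ‖p.2‖ - ‖p.1‖} :=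
    (measurableSet_le measurable_const measurable_snd.norm).inter
      (measurableSet_le measurable_const (measurable_snd.norm.sub measurable_fst.norm))
  have hprod_small : MeasurableSet
      {p : E2 × E2 | kF ≤ ‖p.2‖ ∧ δ ≤ ‖p.2‖ - ‖p.1‖ ∧ ‖p.1 - p.2‖ < R} :=
    (measurableSet_le measurable_const measurable_snd.norm).inter
      ((measurableSet_le measurable_const
          (measurable_snd.norm.sub measurable_fst.norm)).inter
        (measurableSet_lt ((measurable_fst.sub measurable_snd).norm) measurable_const))
  have hIB_sm : StronglyMeasurable IB := by
    have h1 : StronglyMeasurable fun p : E2 × E2 =>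
        Set.indicator {p : E2 × E2 | kF ≤ ‖p.2‖ ∧ δ ≤ ‖p.2‖ - ‖p.1‖}
          (fun p => f p.1 p.2) p :=
      (hFmeas.indicator hprod_big).stronglyMeasurable
    have h2 := h1.integral_prod_right' (ν := volume)
    have h3 : IB = fun k => ∫ l,
        Set.indicator {p : E2 × E2 | kF ≤ ‖p.2‖ ∧ δ ≤ ‖p.2‖ - ‖p.1‖}
          (fun p => f p.1 p.2) (k, l) := by
      funext k
      show (∫ l in bigS k, f k l) = _
      rw [← integral_indicator (hbigmeas k)]
      congr 1
    rw [h3]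
    exact h2
  have hIS_sm : StronglyMeasurable IS := by
    have h1 : StronglyMeasurable fun p : E2 × E2 =>
        Set.indicator {p : E2 × E2 | kF ≤ ‖p.2‖ ∧ δ ≤ ‖p.2‖ - ‖p.1‖ ∧ ‖p.1 - p.2‖ < R}
          (fun p => f p.1 p.2) p :=
      (hFmeas.indicator hprod_small).stronglyMeasurable
    have h2 := h1.integral_prod_right' (ν := volume)
    have h3 : IS = fun k => ∫ l,
        Set.indicator {p : E2 × E2 | kF ≤ ‖p.2‖ ∧ δ ≤ ‖p.2‖ - ‖p.1‖ ∧ ‖p.1 - p.2‖ < R}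
          (fun p => f p.1 p.2) (k, l) := by
      funext k
      show (∫ l in smallS k, f k l) = _
      rw [← integral_indicator (hsmallmeas k)]
      congr 1
    rw [h3]
    exact h2
  have hKball : K = Metric.closedBall (0:E2) kF := by
    ext x
    simp [hKdef, Metric.mem_closedBall, dist_zero_right]
  have hKfin : volume K ≠ ⊤ := by
    rw [hKball]; exact (MeasureTheory.measure_closedBall_lt_top).ne
  have hIB_int : IntegrableOn IB K := by
    apply Measure.integrableOn_of_bounded hKfin hIB_sm.aestronglyMeasurable
      (M := (Real.sqrt (4 * π))⁻¹ * (C * J2))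
    rw [ae_restrict_iff' hKmeas]
    exact ae_of_all _ fun k hk => by
      rw [Real.norm_of_nonneg (hIB_nn k hk)]
      exact hIB_le k hk
  have hIS_int : IntegrableOn IS K := by
    apply Measure.integrableOn_of_bounded hKfin hIS_sm.aestronglyMeasurable
      (M := (Real.sqrt (4 * π))⁻¹ * (C * J2))
    rw [ae_restrict_iff' hKmeas]
    exact ae_of_all _ fun k hk => by
      rw [Real.norm_of_nonneg (hIS_nn k hk)]
      exact le_trans (hdiff k hk).1 (hIB_le k hk)
  set A : ℝ := ∫ k in K, IB k with hAdef
  set B : ℝ := ∫ k in K, IS k with hBdef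
  have hBA : B ≤ A :=
    setIntegral_mono_on hIS_int hIB_int hKmeas (fun k hk => (hdiff k hk).1)
  have hvolK : (volume K).toReal = 4 * π * ρ * c₀ := by
    rw [hKball, Measure.addHaar_closedBall' volume 0 hkF0.le]
    rw [ENNReal.toReal_mul, ENNReal.toReal_ofReal (by positivity)]
    rw [finrank_euclideanSpace_fin]
    rw [hkFdef, Real.sq_sqrt (by positivity), ← hc0def]
  have hABle : A - B ≤ ((Real.sqrt (4 * π))⁻¹ * C * R ^ (-t) * Js) * (4 * π * ρ * c₀) := by
    have h1 : A - B = ∫ k in K, (IB k - IS k) := (integral_sub hIB_int hIS_int).symm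
    rw [h1]
    calc ∫ k in K, (IB k - IS k)
        ≤ ∫ _k in K, ((Real.sqrt (4 * π))⁻¹ * C * R ^ (-t) * Js) :=
          setIntegral_mono_on (hIB_int.sub hIS_int)
            (integrableOn_const hKfin) hKmeas
            (fun k hk => (hdiff k hk).2)
      _ = (volume K).toReal * ((Real.sqrt (4 * π))⁻¹ * C * R ^ (-t) * Js) := by
          rw [setIntegral_const, smul_eq_mul, measureReal_def]
      _ = _ := by rw [hvolK]; ring
  have hEre : Ere v ρ = ((2 * π) ^ (4:ℕ))⁻¹ * A := rfl
  have hEreS : EreS v ε ρ = ((2 * π) ^ (4:ℕ))⁻¹ * B := rfl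
  have hpos : (0:ℝ) < ρ ^ (-(1/ε)) := Real.rpow_pos_of_pos hρ0 _
  have hRt : R ^ (-t) * ρ = ρ ^ (-(1/ε)) := by
    have h1 : R ^ (-t) = ρ ^ (ε * -t) := by
      rw [hRdef, ← Real.rpow_mul hρ0.le]
    calc R ^ (-t) * ρ = ρ ^ (ε * -t) * ρ ^ (1:ℝ) := by rw [h1, Real.rpow_one]
      _ = ρ ^ (ε * -t + 1) := (Real.rpow_add hρ0 _ _).symm
      _ = ρ ^ (-(1/ε)) := by
          congr 1
          rw [htdef]
          field_simp
          ring
  constructor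
  · rw [hEre, hEreS, ← mul_sub]
    exact mul_nonneg (by positivity) (sub_nonneg.2 hBA)
  · rw [hEre, hEreS, ← mul_sub]
    calc ((2 * π) ^ (4:ℕ))⁻¹ * (A - B)
        ≤ ((2 * π) ^ (4:ℕ))⁻¹ *
            (((Real.sqrt (4 * π))⁻¹ * C * R ^ (-t) * Js) * (4 * π * ρ * c₀)) :=
          mul_le_mul_of_nonneg_left hABle (by positivity)
      _ = K0 * (R ^ (-t) * ρ) := by rw [hK0def]; ring
      _ = K0 * ρ ^ (-(1/ε)) := by rw [hRt]
      _ ≤ (K0 + 1) * ρ ^ (-(1/ε)) := by nlinarith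
end
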